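/- arXiv:1810.07422 — 3 statements merged into one kernel-verified Lean document; each statement's English description precedes it below -/
import Mathlib

section
/- Let S[1:n] be a sequence of distinct reals, k ≥ 3, and let 1 ≤ i ≤ m ≤ j ≤ n. Define the matrix A_inc with rows indexed by x ∈ {i,…,m−1} and columns indexed by y ∈ {m,…,j} by A_inc[x,y] = dec[x] + M'[x−1,y] − 1 when M'[x−1,y] ≠ −∞, and A_inc[x,y] = blank otherwise. Then A_inc is a falling staircase anti-Monge matrix. -/
namespace Rollercoaster

/-- The values `S 0, ..., S (n-1)` are pairwise distinct. -/
def DistinctOn (n : ℕ) (S : ℕ → ℝ) : Prop :=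
  ∀ i j, i < n → j < n → S i = S j → i = j

/-- The contiguous slice `A p, A (p+1), ..., A q` is strictly increasing. -/
def IncrSlice (A : ℕ → ℝ) (p q : ℕ) : Prop :=
  ∀ t, p ≤ t → t < q → A t < A (t + 1)

/-- The contiguous slice `A p, A (p+1), ..., A q` is strictly decreasing. -/
def DecrSlice (A : ℕ → ℝ) (p q : ℕ) : Prop :=
  ∀ t, p ≤ t → t < q → A (t + 1) < A t

/-- The contiguous slice `A p, ..., A q` is strictly monotone (increasing or decreasing). -/
def MonoSlice (A : ℕ → ℝ) (p q : ℕ) : Prop :=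
  IncrSlice A p q ∨ DecrSlice A p q

/-- `[p, q]` is a run of the length-`m` sequence `A 0, ..., A (m-1)`: a maximal
contiguous strictly monotone slice. -/
def IsRun (m : ℕ) (A : ℕ → ℝ) (p q : ℕ) : Prop :=
  p ≤ q ∧ q < m ∧ MonoSlice A p q ∧
    (p = 0 ∨ ¬ MonoSlice A (p - 1) q) ∧ (q + 1 = m ∨ ¬ MonoSlice A p (q + 1))

/-- The length-`m` sequence `A 0, ..., A (m-1)` is a `k`-rollercoaster:
every run has length at least `k`. -/
def IsRollercoaster (k m : ℕ) (A : ℕ → ℝ) : Prop :=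
  ∀ p q, IsRun m A p q → k ≤ q + 1 - p

/-- The last run of the length-`m` sequence `A 0, ..., A (m-1)` is increasing. -/
def LastRunInc (m : ℕ) (A : ℕ → ℝ) : Prop :=
  1 ≤ m ∧ ∃ p, IsRun m A p (m - 1) ∧ IncrSlice A p (m - 1)

/-- The last run of the length-`m` sequence `A 0, ..., A (m-1)` is decreasing. -/
def LastRunDec (m : ℕ) (A : ℕ → ℝ) : Prop :=
  1 ≤ m ∧ ∃ p, IsRun m A p (m - 1) ∧ DecrSlice A p (m - 1)

/-- `idx` enumerates `m` positions, strictly increasing, all in `[a, b)`;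
this selects a (not necessarily contiguous) subsequence of the positions `a, ..., b-1`. -/
def IsSubseqIdx (a b m : ℕ) (idx : ℕ → ℕ) : Prop :=
  (∀ t, t < m → a ≤ idx t ∧ idx t < b) ∧ ∀ s t, s < t → t < m → idx s < idx t

/-- Length of a longest strictly increasing subsequence of `S` on positions `[a, b)`. -/
noncomputable def LIS (S : ℕ → ℝ) (a b : ℕ) : ℕ :=
  sSup {m | ∃ idx : ℕ → ℕ, IsSubseqIdx a b m idx ∧
    ∀ s t, s < t → t < m → S (idx s) < S (idx t)}

/-- Length of a longest strictly decreasing subsequence of `S` on positions `[a, b)`. -/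
noncomputable def LDS (S : ℕ → ℝ) (a b : ℕ) : ℕ :=
  sSup {m | ∃ idx : ℕ → ℕ, IsSubseqIdx a b m idx ∧
    ∀ s t, s < t → t < m → S (idx t) < S (idx s)}

/-- The matrix `M`: `M[i,j]` is the length of a LIS of `S` on positions `[i, j)`
(the 1-based contiguous subsequence `S[i+1:j]`) when `i < j`, and `j - i` otherwise. -/
noncomputable def Mmat (S : ℕ → ℝ) (i j : ℕ) : ℤ :=
  if i < j then (LIS S i j : ℤ) else (j : ℤ) - (i : ℤ)

/-- `inc[x]`: length of a longest `k`-rollercoaster contained in positions `[0, x)`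
(the 1-based prefix `S[1:x]`) whose last run is increasing; `0` if none exists. -/
noncomputable def incLen (k : ℕ) (S : ℕ → ℝ) (x : ℕ) : ℕ :=
  sSup {m | ∃ idx : ℕ → ℕ, IsSubseqIdx 0 x m idx ∧
    IsRollercoaster k m (fun t => S (idx t)) ∧ LastRunInc m (fun t => S (idx t))}

/-- `dec[x]`: length of a longest `k`-rollercoaster contained in positions `[0, x)`
(the 1-based prefix `S[1:x]`) whose last run is decreasing; `0` if none exists. -/
noncomputable def decLen (k : ℕ) (S : ℕ → ℝ) (x : ℕ) : ℕ :=
  sSup {m | ∃ idx : ℕ → ℕ, IsSubseqIdx 0 x m idx ∧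
    IsRollercoaster k m (fun t => S (idx t)) ∧ LastRunDec m (fun t => S (idx t))}

/-- The entry of `A_inc` in row `x` and column `y` is non-blank, i.e.
`M'[x-1, y] ≠ -∞`. -/
def NonBlank (k : ℕ) (S : ℕ → ℝ) (x y : ℕ) : Prop :=
  (k : ℤ) ≤ Mmat S (x - 1) y

/-- The (non-blank) value of `A_inc` in row `x` and column `y`:
`dec[x] + M'[x-1, y] - 1`. -/
noncomputable def AincVal (k : ℕ) (S : ℕ → ℝ) (x y : ℕ) : ℤ :=
  (decLen k S x : ℤ) + Mmat S (x - 1) y - 1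

section Helpers

variable (S : ℕ → ℝ)

abbrev ChainMem (S : ℕ → ℝ) (a b m : ℕ) : Prop :=
  ∃ idx : ℕ → ℕ, IsSubseqIdx a b m idx ∧ ∀ s t, s < t → t < m → S (idx s) < S (idx t)

lemma LIS_def (a b : ℕ) : LIS S a b = sSup {m | ChainMem S a b m} := rfl

lemma chainMem_zero (a b : ℕ) : ChainMem S a b 0 :=
  ⟨id, ⟨fun t ht => absurd ht (Nat.not_lt_zero t), fun _ t _ ht => absurd ht (Nat.not_lt_zero t)⟩,
    fun _ t _ ht => absurd ht (Nat.not_lt_zero t)⟩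

lemma idx_lower {a b m : ℕ} {idx : ℕ → ℕ} (h : IsSubseqIdx a b m idx) :
    ∀ t, t < m → a + t ≤ idx t := by
  intro t ht
  induction t with
  | zero => simpa using (h.1 0 ht).1
  | succ u ih =>
    have h1 := ih (by omega)
    have h2 := h.2 u (u + 1) (by omega) ht
    omega

lemma chainMem_le {a b m : ℕ} (h : ChainMem S a b m) : m ≤ b - a := by
  obtain ⟨idx, hidx, -⟩ := h
  rcases Nat.eq_zero_or_pos m with rfl | hm
  · omega
  have h1 := idx_lower hidx (m - 1) (by omega)
  have h2 := (hidx.1 (m - 1) (by omega)).2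
  omega

lemma lis_bdd (a b : ℕ) : BddAbove {m | ChainMem S a b m} :=
  ⟨b - a, fun _ hm => chainMem_le S hm⟩

lemma le_LIS {a b m : ℕ} (h : ChainMem S a b m) : m ≤ LIS S a b :=
  le_csSup (lis_bdd S a b) h

lemma LIS_le {a b N : ℕ} (h : ∀ m, ChainMem S a b m → m ≤ N) : LIS S a b ≤ N :=
  csSup_le ⟨0, chainMem_zero S a b⟩ h

lemma LIS_mem (a b : ℕ) : ChainMem S a b (LIS S a b) :=
  Nat.sSup_mem ⟨0, chainMem_zero S a b⟩ (lis_bdd S a b)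

lemma chainMem_mono {a a' b b' m : ℕ} (ha : a ≤ a') (hb : b' ≤ b)
    (h : ChainMem S a' b' m) : ChainMem S a b m := by
  obtain ⟨idx, ⟨h1, h2⟩, h3⟩ := h
  exact ⟨idx, ⟨fun t ht => ⟨le_trans ha (h1 t ht).1, lt_of_lt_of_le (h1 t ht).2 hb⟩, h2⟩, h3⟩

lemma LIS_mono {a a' b b' : ℕ} (ha : a ≤ a') (hb : b' ≤ b) : LIS S a' b' ≤ LIS S a b :=
  LIS_le S fun _ hm => le_LIS S (chainMem_mono S ha hb hm)

lemma LIS_pos {a b : ℕ} (h : a < b) : 1 ≤ LIS S a b :=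
  le_LIS S ⟨fun _ => a, ⟨fun _ _ => ⟨le_refl a, h⟩, fun s t hst ht => by omega⟩,
    fun s t hst ht => by omega⟩

lemma LIS_self (a : ℕ) : LIS S a a = 0 := by
  have h := LIS_le S (a := a) (b := a) (N := 0) ?_
  · omega
  intro m hm
  by_contra h
  obtain ⟨idx, h1, -⟩ := hm
  have := h1.1 0 (by omega)
  omega

lemma LIS_left {a b : ℕ} : LIS S a b ≤ LIS S (a + 1) b + 1 := by
  apply LIS_le
  intro m hm
  obtain ⟨idx, ⟨h1, h2⟩, h3⟩ := hm
  rcases Nat.eq_zero_or_pos m with rfl | hm0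
  · omega
  have hc : ChainMem S (a + 1) b (m - 1) := by
    refine ⟨fun t => idx (t + 1), ⟨fun t ht => ?_, fun s t hst ht => h2 _ _ (by omega) (by omega)⟩,
      fun s t hst ht => h3 _ _ (by omega) (by omega)⟩
    dsimp only
    constructor
    · have := h2 0 (t + 1) (by omega) (by omega)
      have := (h1 0 (by omega)).1
      omega
    · exact (h1 (t + 1) (by omega)).2
  have := le_LIS S hc
  omega

lemma LIS_right {a b : ℕ} : LIS S a (b + 1) ≤ LIS S a b + 1 := by
  apply LIS_le
  intro m hm
  obtain ⟨idx, ⟨h1, h2⟩, h3⟩ := hm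
  rcases Nat.eq_zero_or_pos m with rfl | hm0
  · omega
  have hc : ChainMem S a b (m - 1) := by
    refine ⟨idx, ⟨fun t ht => ⟨(h1 t (by omega)).1, ?_⟩,
      fun s t hst ht => h2 _ _ hst (by omega)⟩, fun s t hst ht => h3 _ _ hst (by omega)⟩
    have hlast := (h1 (m - 1) (by omega)).2
    have := h2 t (m - 1) (by omega) (by omega)
    omega
  have := le_LIS S hc
  omega

/-- Glue two chains into one. -/
lemma chainMem_glue {a b m1 m2 : ℕ} {f g : ℕ → ℕ}
    (hf : ∀ t, t < m1 → a ≤ f t ∧ f t < b) (hg : ∀ t, t < m2 → a ≤ g t ∧ g t < b)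
    (hfm : ∀ s t, s < t → t < m1 → f s < f t) (hgm : ∀ s t, s < t → t < m2 → g s < g t)
    (hfv : ∀ s t, s < t → t < m1 → S (f s) < S (f t))
    (hgv : ∀ s t, s < t → t < m2 → S (g s) < S (g t))
    (hcross : ∀ s t, s < m1 → t < m2 → f s < g t ∧ S (f s) < S (g t)) :
    ChainMem S a b (m1 + m2) := by
  refine ⟨fun t => if t < m1 then f t else g (t - m1), ⟨fun t ht => ?_, fun s t hst ht => ?_⟩,
    fun s t hst ht => ?_⟩
  · dsimp only
    rcases lt_or_ge t m1 with h | h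
    · rw [if_pos h]; exact hf t h
    · rw [if_neg (by omega)]; exact hg (t - m1) (by omega)
  · dsimp only
    rcases lt_or_ge s m1 with hs | hs <;> rcases lt_or_ge t m1 with ht1 | ht1
    · rw [if_pos hs, if_pos ht1]; exact hfm s t hst ht1
    · rw [if_pos hs, if_neg (by omega)]; exact (hcross s (t - m1) hs (by omega)).1
    · omega
    · rw [if_neg (by omega), if_neg (by omega)]
      exact hgm (s - m1) (t - m1) (by omega) (by omega)
  · dsimp only
    rcases lt_or_ge s m1 with hs | hs <;> rcases lt_or_ge t m1 with ht1 | ht1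
    · rw [if_pos hs, if_pos ht1]; exact hfv s t hst ht1
    · rw [if_pos hs, if_neg (by omega)]; exact (hcross s (t - m1) hs (by omega)).2
    · omega
    · rw [if_neg (by omega), if_neg (by omega)]
      exact hgv (s - m1) (t - m1) (by omega) (by omega)

lemma chain_le_val {m : ℕ} {d : ℕ → ℕ}
    (hdv : ∀ s t, s < t → t < m → S (d s) < S (d t)) {s t : ℕ} (hst : s ≤ t) (ht : t < m) :
    S (d s) ≤ S (d t) := by
  rcases eq_or_lt_of_le hst with rfl | h
  · exact le_refl _
  · exact le_of_lt (hdv s t h ht)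

lemma chain_le_idx {m : ℕ} {d : ℕ → ℕ}
    (hdm : ∀ s t, s < t → t < m → d s < d t) {s t : ℕ} (hst : s ≤ t) (ht : t < m) :
    d s ≤ d t := by
  rcases eq_or_lt_of_le hst with rfl | h
  · exact le_refl _
  · exact le_of_lt (hdm s t h ht)

end Helpers


section Main

variable (S : ℕ → ℝ)

lemma cell {n : ℕ} (hS : DistinctOn n S) {a p : ℕ} (hap : a < p) (hpn : p < n) :
    LIS S a (p + 1) + LIS S (a + 1) p ≤ LIS S a p + LIS S (a + 1) (p + 1) := by
  have hmono1 : LIS S (a+1) p ≤ LIS S a p := LIS_mono S (by omega) le_rfl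
  have hmono2 : LIS S (a+1) p ≤ LIS S (a+1) (p+1) := LIS_mono S le_rfl (by omega)
  have hA1 : LIS S a p ≤ LIS S (a+1) p + 1 := LIS_left S
  have hB1 : LIS S (a+1) (p+1) ≤ LIS S (a+1) p + 1 := LIS_right S
  have hGA : LIS S a (p+1) ≤ LIS S a p + 1 := LIS_right S
  have hGB : LIS S a (p+1) ≤ LIS S (a+1) (p+1) + 1 := LIS_left S
  by_cases hA : LIS S a p = LIS S (a+1) p + 1
  · omega
  by_cases hB : LIS S (a+1) (p+1) = LIS S (a+1) p + 1
  · omega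
  have hA' : LIS S a p = LIS S (a+1) p := by omega
  have hB' : LIS S (a+1) (p+1) = LIS S (a+1) p := by omega
  by_contra hcon
  have hG' : LIS S a (p+1) = LIS S (a+1) p + 1 := by omega
  set L := LIS S (a+1) p with hL
  have hap1 : a + 1 < p := by
    by_contra h
    have hpe : p = a + 1 := by omega
    have h1 : 1 ≤ LIS S a p := LIS_pos S hap
    have h0 : LIS S (a+1) p = 0 := by rw [hpe]; exact LIS_self S (a+1)
    omega
  have hL1 : 1 ≤ L := by rw [hL]; exact LIS_pos S hap1
  have hxmem := LIS_mem S a (p+1)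
  rw [hG'] at hxmem
  obtain ⟨x, hx, hxv⟩ := hxmem
  have hdmem := LIS_mem S (a+1) p
  rw [← hL] at hdmem
  obtain ⟨d, hd, hdv⟩ := hdmem
  have hx0 : x 0 = a := by
    by_contra h0
    have hge : ∀ t, t < L + 1 → a + 1 ≤ x t ∧ x t < p + 1 := by
      intro t ht
      refine ⟨?_, (hx.1 t ht).2⟩
      rcases Nat.eq_zero_or_pos t with rfl | htp
      · have := (hx.1 0 ht).1; omega
      · have := hx.2 0 t htp ht
        have := (hx.1 0 (by omega)).1
        omega
    have hc : ChainMem S (a+1) (p+1) (L+1) := ⟨x, ⟨hge, hx.2⟩, hxv⟩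
    have := le_LIS S hc
    omega
  have hxL : x L = p := by
    by_contra h0
    have hlt : x L < p := by have := (hx.1 L (by omega)).2; omega
    have hge : ∀ t, t < L + 1 → a ≤ x t ∧ x t < p := by
      intro t ht
      refine ⟨(hx.1 t ht).1, ?_⟩
      rcases eq_or_lt_of_le (Nat.lt_succ_iff.mp ht) with rfl | htp
      · exact hlt
      · have := hx.2 t L htp (by omega); omega
    have hc : ChainMem S a p (L+1) := ⟨x, ⟨hge, hx.2⟩, hxv⟩
    have := le_LIS S hc
    omega
  have hi1 : S (d 0) < S (x 0) := by
    rcases lt_trichotomy (S (d 0)) (S (x 0)) with h | h | h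
    · exact h
    · exfalso
      have hd0 := hd.1 0 (by omega)
      have := hS (d 0) (x 0) (by omega) (by omega) h
      omega
    · exfalso
      have hc : ChainMem S a p (1 + L) := by
        apply chainMem_glue S (f := fun _ => x 0) (g := d)
        · intro t ht
          show a ≤ x 0 ∧ x 0 < p
          rw [hx0]; exact ⟨le_rfl, hap⟩
        · intro t ht
          have := hd.1 t ht; omega
        · intro s t hst ht; omega
        · exact hd.2
        · intro s t hst ht; omega
        · exact hdv
        · intro s t hs ht
          refine ⟨?_, ?_⟩
          · show x 0 < d t
            have := hd.1 t ht; omega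
          · show S (x 0) < S (d t)
            calc S (x 0) < S (d 0) := h
              _ ≤ S (d t) := chain_le_val S hdv (by omega) ht
      have := le_LIS S hc
      omega
  have hi2 : S (x L) < S (d (L-1)) := by
    rcases lt_trichotomy (S (x L)) (S (d (L-1))) with h | h | h
    · exact h
    · exfalso
      have hdL := hd.1 (L-1) (by omega)
      have := hS (x L) (d (L-1)) (by omega) (by omega) h
      omega
    · exfalso
      have hc : ChainMem S (a+1) (p+1) (L + 1) := by
        apply chainMem_glue S (f := d) (g := fun _ => x L)
        · intro t ht; have := hd.1 t ht; omega
        · intro t ht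
          show a + 1 ≤ x L ∧ x L < p + 1
          omega
        · exact hd.2
        · intro s t hst ht; omega
        · exact hdv
        · intro s t hst ht; omega
        · intro s t hs ht
          refine ⟨?_, ?_⟩
          · show d s < x L
            have := hd.1 s hs; omega
          · show S (d s) < S (x L)
            calc S (d s) ≤ S (d (L-1)) := chain_le_val S hdv (by omega) (by omega)
              _ < S (x L) := h
      have := le_LIS S hc
      omega
  classical
  have hwit : S (x (L-1)) < S (d (L-1)) :=
    lt_trans (hxv (L-1) L (by omega) (by omega)) hi2
  have hex : ∃ r, S (x r) < S (d r) := ⟨L - 1, hwit⟩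
  set r := Nat.find hex with hrdef
  have hPr : S (x r) < S (d r) := Nat.find_spec hex
  have hrle : r ≤ L - 1 := Nat.find_min' hex hwit
  have hr1 : 1 ≤ r := by
    rcases Nat.eq_zero_or_pos r with h0 | h
    · exfalso
      rw [h0] at hPr
      exact absurd hPr (not_lt.2 (le_of_lt hi1))
    · exact h
  have hPr' : ¬ S (x (r-1)) < S (d (r-1)) := Nat.find_min hex (by omega)
  have hkey : S (d (r-1)) < S (x r) :=
    lt_of_le_of_lt (not_lt.1 hPr') (hxv (r-1) r (by omega) (by omega))
  rcases lt_trichotomy (d (r-1)) (x r) with hlt | heq | hgt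
  · have hc : ChainMem S (a+1) (p+1) (r + (L + 1 - r)) := by
      apply chainMem_glue S (f := d) (g := fun t => x (t + r))
      · intro t ht; have := hd.1 t (by omega); omega
      · intro t ht
        show a + 1 ≤ x (t + r) ∧ x (t + r) < p + 1
        constructor
        · have h1 := hx.2 0 (t + r) (by omega) (by omega)
          have := (hx.1 0 (by omega)).1
          omega
        · exact (hx.1 (t + r) (by omega)).2
      · intro s t hst ht; exact hd.2 s t hst (by omega)
      · intro s t hst ht; exact hx.2 (s + r) (t + r) (by omega) (by omega)
      · intro s t hst ht; exact hdv s t hst (by omega)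
      · intro s t hst ht; exact hxv (s + r) (t + r) (by omega) (by omega)
      · intro s t hs ht
        refine ⟨?_, ?_⟩
        · show d s < x (t + r)
          calc d s ≤ d (r - 1) := chain_le_idx hd.2 (by omega) (by omega)
            _ < x r := hlt
            _ ≤ x (t + r) := chain_le_idx hx.2 (by omega) (by omega)
        · show S (d s) < S (x (t + r))
          calc S (d s) ≤ S (d (r - 1)) := chain_le_val S hdv (by omega) (by omega)
            _ < S (x r) := hkey
            _ ≤ S (x (t + r)) := chain_le_val S hxv (by omega) (by omega)
    have := le_LIS S hc
    omega
  · exact absurd (congrArg S heq) (ne_of_lt hkey)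
  · have hc : ChainMem S a p ((r + 1) + (L - r)) := by
      apply chainMem_glue S (f := x) (g := fun t => d (t + r))
      · intro t ht
        refine ⟨(hx.1 t (by omega)).1, ?_⟩
        have h1 : x t ≤ x r := chain_le_idx hx.2 (by omega) (by omega)
        have h2 := hd.1 (r - 1) (by omega)
        omega
      · intro t ht
        show a ≤ d (t + r) ∧ d (t + r) < p
        have := hd.1 (t + r) (by omega)
        omega
      · intro s t hst ht; exact hx.2 s t hst (by omega)
      · intro s t hst ht; exact hd.2 (s + r) (t + r) (by omega) (by omega)
      · intro s t hst ht; exact hxv s t hst (by omega)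
      · intro s t hst ht; exact hdv (s + r) (t + r) (by omega) (by omega)
      · intro s t hs ht
        refine ⟨?_, ?_⟩
        · show x s < d (t + r)
          have h1 : x s ≤ x r := chain_le_idx hx.2 (by omega) (by omega)
          have h2 : d (r - 1) ≤ d (t + r) := chain_le_idx hd.2 (by omega) (by omega)
          omega
        · show S (x s) < S (d (t + r))
          calc S (x s) ≤ S (x r) := chain_le_val S hxv (by omega) (by omega)
            _ < S (d r) := hPr
            _ ≤ S (d (t + r)) := chain_le_val S hdv (by omega) (by omega)
    have := le_LIS S hc
    omega

lemma monge_adj {n : ℕ} (hS : DistinctOn n S) {a p : ℕ} (hap : a < p) :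
    ∀ q, p ≤ q → q ≤ n → LIS S a q + LIS S (a + 1) p ≤ LIS S a p + LIS S (a + 1) q := by
  intro q hpq
  induction q, hpq using Nat.le_induction with
  | base => intro _; omega
  | succ q hq ih =>
    intro hqn
    have hc := cell S hS (show a < q by omega) (show q < n by omega)
    have h2 := ih (by omega)
    omega

lemma monge {n : ℕ} (hS : DistinctOn n S) {a p q : ℕ} (hpq : p ≤ q) (hqn : q ≤ n) :
    ∀ b, a ≤ b → b < p → LIS S a q + LIS S b p ≤ LIS S a p + LIS S b q := by
  intro b hab
  induction b, hab using Nat.le_induction with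
  | base => intro _; omega
  | succ b hb ih =>
    intro hbp
    have h1 := ih (by omega)
    have h2 := monge_adj S hS (show b < p by omega) q hpq hqn
    omega

end Main

/-- The matrix `A_inc`, with rows `x ∈ {i, ..., m-1}` and columns `y ∈ {m, ..., j}`,
is a falling staircase anti-Monge matrix: for every blank entry all entries below it
and to its left are blank, and the anti-Monge inequality holds whenever all four
concerned entries are non-blank. -/
theorem stmt10 (k n i m j : ℕ) (hk : 3 ≤ k) (S : ℕ → ℝ) (hS : DistinctOn n S)
    (hi : 1 ≤ i) (him : i ≤ m) (hmj : m ≤ j) (hjn : j ≤ n) :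
    (∀ x y x' y', i ≤ x → x ≤ x' → x' ≤ m - 1 → m ≤ y' → y' ≤ y → y ≤ j →
      ¬ NonBlank k S x y → ¬ NonBlank k S x' y') ∧
    (∀ x x' y y', i ≤ x → x < x' → x' ≤ m - 1 → m ≤ y → y < y' → y' ≤ j →
      NonBlank k S x y → NonBlank k S x y' → NonBlank k S x' y → NonBlank k S x' y' →
      AincVal k S x y' + AincVal k S x' y ≤ AincVal k S x y + AincVal k S x' y') := by
  constructor
  · intro x y x' y' hix hxx' hx'm hmy' hy'y hyj hnb hnb'
    apply hnb
    unfold NonBlank Mmat at hnb' ⊢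
    have h1 : x - 1 < y := by omega
    have h2 : x' - 1 < y' := by omega
    rw [if_pos h1]
    rw [if_pos h2] at hnb'
    have hmono : LIS S (x' - 1) y' ≤ LIS S (x - 1) y := LIS_mono S (by omega) (by omega)
    calc (k : ℤ) ≤ (LIS S (x' - 1) y' : ℤ) := hnb'
      _ ≤ (LIS S (x - 1) y : ℤ) := by exact_mod_cast hmono
  · intro x x' y y' hix hxx' hx'm hmy hyy' hy'j _ _ _ _
    have h11 : x - 1 < y := by omega
    have h12 : x - 1 < y' := by omega
    have h21 : x' - 1 < y := by omega
    have h22 : x' - 1 < y' := by omega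
    have hmg := monge S hS (a := x - 1) (show y ≤ y' by omega) (show y' ≤ n by omega)
      (x' - 1) (show x - 1 ≤ x' - 1 by omega) (show x' - 1 < y by omega)
    unfold AincVal Mmat
    rw [if_pos h11, if_pos h12, if_pos h21, if_pos h22]
    omega


end Rollercoaster
end

section
/- Let S[1:n] be a sequence of distinct reals and k ≥ 3. For all indices i and j with 1 ≤ j ≤ i ≤ n and j > i − k + 1, one has inc_j[i] = inc[i]. -/
namespace Rollercoaster

/-- `inc_d'[x] = max { dec[i] + M'[i-1, x] - 1 : 1 ≤ i ≤ d-1, M'[i-1, x] ≠ -∞ }`,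
and `0` if there is no such `i`. -/
noncomputable def incDAux (k : ℕ) (S : ℕ → ℝ) (d x : ℕ) : ℕ :=
  ((Finset.Icc 1 (d - 1)).filter (fun i => (k : ℤ) ≤ Mmat S (i - 1) x)).sup
    (fun i => decLen k S i + (Mmat S (i - 1) x).toNat - 1)

/-- `inc_d[x] = max { inc_d'[x], M'[0, x] }`, taking the maximum with `0`
when all candidates are `-∞`. -/
noncomputable def incD (k : ℕ) (S : ℕ → ℝ) (d x : ℕ) : ℕ :=
  max (incDAux k S d x) (if (k : ℤ) ≤ Mmat S 0 x then (Mmat S 0 x).toNat else 0)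

/-! ### helper layer -/


/-- Edge `t` goes up. -/
def EdgeUp (C : ℕ → ℝ) (t : ℕ) : Prop := C t < C (t + 1)

lemma incr_chain {A : ℕ → ℝ} {a b : ℕ} (h : IncrSlice A a b) :
    ∀ t s, a ≤ s → s < t → t ≤ b → A s < A t := by
  intro t
  induction t with
  | zero => omega
  | succ t ih =>
    intro s hs hst htb
    rcases Nat.lt_succ_iff_lt_or_eq.mp hst with h' | h'
    · exact lt_trans (ih s hs h' (by omega)) (h t (by omega) (by omega))
    · subst h'; exact h s hs (by omega)

lemma mono_of_edges {C : ℕ → ℝ} {M p q : ℕ} (hq : q < M)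
    (hd : ∀ t, t + 1 < M → C t ≠ C (t + 1))
    (hconst : ∀ t, p ≤ t → t < q → (EdgeUp C t ↔ EdgeUp C p)) :
    MonoSlice C p q := by
  rcases le_or_gt q p with h | h
  · exact Or.inl (fun t ht ht' => absurd (lt_of_le_of_lt ht ht') (by omega))
  · by_cases hp : EdgeUp C p
    · exact Or.inl (fun t ht ht' => (hconst t ht ht').mpr hp)
    · refine Or.inr (fun t ht ht' => ?_)
      have h1 : ¬ EdgeUp C t := fun h2 => hp ((hconst t ht ht').mp h2)
      have h2 := hd t (by omega)
      rcases lt_trichotomy (C t) (C (t+1)) with h3 | h3 | h3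
      · exact absurd h3 h1
      · exact absurd h3 h2
      · exact h3

/-- R1: build a run from edge data. -/
lemma isRun_of_edges {C : ℕ → ℝ} {M p q : ℕ}
    (hd : ∀ t, t + 1 < M → C t ≠ C (t + 1))
    (hpq : p < q) (hqM : q < M)
    (hconst : ∀ t, p ≤ t → t < q → (EdgeUp C t ↔ EdgeUp C p))
    (hleft : p = 0 ∨ ¬ (EdgeUp C (p - 1) ↔ EdgeUp C p))
    (hright : q + 1 = M ∨ ¬ (EdgeUp C q ↔ EdgeUp C p)) :
    IsRun M C p q := by
  refine ⟨le_of_lt hpq, hqM, mono_of_edges hqM hd hconst, ?_, ?_⟩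
  · rcases hleft with h | h
    · exact Or.inl h
    · refine Or.inr (fun hmono => h ?_)
      have hp1 : p - 1 + 1 = p ∨ p = 0 := by omega
      rcases hp1 with hp1 | hp1
      · rcases hmono with hm | hm
        · have h1 : EdgeUp C p := hm p (by omega) hpq
          have h2 : EdgeUp C (p-1) := by
            have := hm (p-1) (le_refl _) (by omega)
            unfold EdgeUp; exact this
          exact ⟨fun _ => h1, fun _ => h2⟩
        · have h1 : C (p+1) < C p := hm p (by omega) hpq
          have h2 : C p < C (p-1) := by
            have := hm (p-1) (le_refl _) (by omega)
            rwa [hp1] at this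
          constructor
          · intro hh; unfold EdgeUp at hh; rw [hp1] at hh; exact absurd hh (asymm h2)
          · intro hh; exact absurd hh (asymm h1)
      · subst hp1; simp
  · rcases hright with h | h
    · exact Or.inl h
    · refine Or.inr (fun hmono => h ?_)
      rcases hmono with hm | hm
      · have h1 : EdgeUp C p := hm p (le_refl _) (by omega)
        have h2 : EdgeUp C q := hm q (by omega) (by omega)
        exact ⟨fun _ => h1, fun _ => h2⟩
      · have h1 : C (p+1) < C p := hm p (le_refl _) (by omega)
        have h2 : C (q+1) < C q := hm q (by omega) (by omega)
        constructor
        · intro hh; exact absurd hh (asymm h2)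
        · intro hh; exact absurd hh (asymm h1)

/-- R2: extract edge data from a run. -/
lemma edges_of_isRun {C : ℕ → ℝ} {M p q : ℕ}
    (hd : ∀ t, t + 1 < M → C t ≠ C (t + 1)) (hM : 2 ≤ M)
    (hrun : IsRun M C p q) :
    p < q ∧ (∀ t, p ≤ t → t < q → (EdgeUp C t ↔ EdgeUp C p)) ∧
      (p = 0 ∨ ¬ (EdgeUp C (p - 1) ↔ EdgeUp C p)) ∧
      (q + 1 = M ∨ ¬ (EdgeUp C q ↔ EdgeUp C p)) := by
  obtain ⟨hpq, hqM, hmono, hl, hr⟩ := hrun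
  have single : ∀ a, a + 1 < M → MonoSlice C a (a + 1) := by
    intro a ha
    have h2 := hd a ha
    rcases lt_trichotomy (C a) (C (a+1)) with h3 | h3 | h3
    · refine Or.inl (fun t ht ht' => ?_)
      have hta : t = a := by omega
      subst hta; exact h3
    · exact absurd h3 h2
    · refine Or.inr (fun t ht ht' => ?_)
      have hta : t = a := by omega
      subst hta; exact h3
  have hplt : p < q := by
    rcases Nat.lt_or_ge p q with h | h
    · exact h
    · exfalso
      have hpq' : p = q := by omega
      subst hpq'
      have hp0 : p = 0 := by
        rcases hl with h0 | h0
        · exact h0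
        · by_contra hne
          have : MonoSlice C (p-1) p := by
            have := single (p-1) (by omega)
            have e : p - 1 + 1 = p := by omega
            rwa [e] at this
          exact h0 this
      have hq1 : p + 1 = M := by
        rcases hr with h0 | h0
        · exact h0
        · by_contra hne
          exact h0 (single p (by omega))
      omega
  have hconst : ∀ t, p ≤ t → t < q → (EdgeUp C t ↔ EdgeUp C p) := by
    intro t ht ht'
    rcases hmono with hm | hm
    · exact ⟨fun _ => hm p le_rfl hplt, fun _ => hm t ht ht'⟩
    · have h1 := hm p le_rfl hplt
      have h2 := hm t ht ht'
      exact ⟨fun hh => absurd hh (asymm h2), fun hh => absurd hh (asymm h1)⟩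
  refine ⟨hplt, hconst, ?_, ?_⟩
  · rcases hl with h0 | h0
    · exact Or.inl h0
    · refine Or.inr (fun hiff => h0 ?_)
      refine mono_of_edges hqM hd (fun t ht ht' => ?_)
      by_cases hp0 : p = 0
      · subst hp0
        exact hconst t (by omega) ht'
      · rcases Nat.eq_or_lt_of_le ht with h1 | h1
        · rw [← h1]
        · have ht2 : p ≤ t := by omega
          exact (hconst t ht2 ht').trans hiff.symm
  · by_cases hq1 : q + 1 = M
    · exact Or.inl hq1
    · have hr' : ¬ MonoSlice C p (q+1) := by
        rcases hr with h0 | h0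
        · exact absurd h0 hq1
        · exact h0
      refine Or.inr (fun hiff => hr' ?_)
      refine mono_of_edges (by omega) hd (fun t ht ht' => ?_)
      rcases Nat.lt_or_ge t q with h1 | h1
      · exact hconst t ht h1
      · have : t = q := by omega
        subst this; exact hiff

/-- R3: every edge lies inside some run. -/
lemma exists_run_through_edge {C : ℕ → ℝ} {M t : ℕ}
    (hd : ∀ t, t + 1 < M → C t ≠ C (t + 1)) (ht : t + 1 < M) :
    ∃ p q, IsRun M C p q ∧ p ≤ t ∧ t < q := by
  classical
  set P : Finset ℕ := (Finset.range (t+1)).filter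
    (fun s => ∀ r, s ≤ r → r ≤ t → (EdgeUp C r ↔ EdgeUp C t)) with hP
  have htP : t ∈ P := by
    simp only [hP, Finset.mem_filter, Finset.mem_range]
    exact ⟨by omega, fun r hr hr' => by rw [Nat.le_antisymm hr' hr]⟩
  have hPne : P.Nonempty := ⟨t, htP⟩
  set p := P.min' hPne with hp
  have hpP : p ∈ P := P.min'_mem hPne
  have hpt : p ≤ t := by
    have := (Finset.mem_filter.mp hpP).1
    simp only [Finset.mem_range] at this; omega
  have hpconst : ∀ r, p ≤ r → r ≤ t → (EdgeUp C r ↔ EdgeUp C t) :=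
    (Finset.mem_filter.mp hpP).2
  set Q : Finset ℕ := (Finset.Icc t (M-2)).filter
    (fun s => ∀ r, t ≤ r → r ≤ s → (EdgeUp C r ↔ EdgeUp C t)) with hQ
  have htQ : t ∈ Q := by
    simp only [hQ, Finset.mem_filter, Finset.mem_Icc]
    exact ⟨⟨le_refl _, by omega⟩, fun r hr hr' => by rw [Nat.le_antisymm hr' hr]⟩
  have hQne : Q.Nonempty := ⟨t, htQ⟩
  set qm := Q.max' hQne with hqm
  have hqmQ : qm ∈ Q := Q.max'_mem hQne
  have hqmle : t ≤ qm ∧ qm ≤ M - 2 := by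
    have := (Finset.mem_filter.mp hqmQ).1
    simpa [Finset.mem_Icc] using this
  have hqconst : ∀ r, t ≤ r → r ≤ qm → (EdgeUp C r ↔ EdgeUp C t) :=
    (Finset.mem_filter.mp hqmQ).2
  have hconst : ∀ r, p ≤ r → r < qm + 1 → (EdgeUp C r ↔ EdgeUp C p) := by
    intro r hr hr'
    have hpe : EdgeUp C p ↔ EdgeUp C t := hpconst p (le_refl _) hpt
    rcases Nat.lt_or_ge r t with h1 | h1
    · exact (hpconst r hr (by omega)).trans hpe.symm
    · exact (hqconst r h1 (by omega)).trans hpe.symm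
  have hleft : p = 0 ∨ ¬ (EdgeUp C (p-1) ↔ EdgeUp C p) := by
    by_cases hp0 : p = 0
    · exact Or.inl hp0
    · refine Or.inr (fun hiff => ?_)
      have hmem : p - 1 ∈ P := by
        simp only [hP, Finset.mem_filter, Finset.mem_range]
        refine ⟨by omega, fun r hr hr' => ?_⟩
        rcases Nat.eq_or_lt_of_le hr with h1 | h1
        · rw [← h1]
          exact hiff.trans (hpconst p (le_refl _) hpt)
        · exact hpconst r (by omega) hr'
      have := P.min'_le _ hmem
      omega
  have hright : qm + 1 + 1 = M ∨ ¬ (EdgeUp C (qm+1) ↔ EdgeUp C p) := by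
    by_cases hq0 : qm + 1 + 1 = M
    · exact Or.inl hq0
    · refine Or.inr (fun hiff => ?_)
      have hmem : qm + 1 ∈ Q := by
        simp only [hQ, Finset.mem_filter, Finset.mem_Icc]
        refine ⟨⟨by omega, by omega⟩, fun r hr hr' => ?_⟩
        rcases Nat.lt_or_ge r (qm+1) with h1 | h1
        · exact hqconst r hr (by omega)
        · have : r = qm + 1 := by omega
          rw [this]
          exact hiff.trans (hpconst p (le_refl _) hpt)
      have := Q.le_max' _ hmem
      omega
  refine ⟨p, qm + 1, isRun_of_edges hd (by omega) (by omega) hconst hleft hright, hpt, by omega⟩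

lemma incrSlice_congr {A C : ℕ → ℝ} {p q : ℕ} (h : ∀ t, t ≤ q → A t = C t)
    (hC : IncrSlice C p q) : IncrSlice A p q := by
  intro t ht ht'
  rw [h t (by omega), h (t+1) (by omega)]
  exact hC t ht ht'

lemma decrSlice_congr {A C : ℕ → ℝ} {p q : ℕ} (h : ∀ t, t ≤ q → A t = C t)
    (hC : DecrSlice C p q) : DecrSlice A p q := by
  intro t ht ht'
  rw [h t (by omega), h (t+1) (by omega)]
  exact hC t ht ht'

lemma monoSlice_congr {A C : ℕ → ℝ} {p q : ℕ} (h : ∀ t, t ≤ q → A t = C t)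
    (hC : MonoSlice C p q) : MonoSlice A p q := by
  rcases hC with h1 | h1
  · exact Or.inl (incrSlice_congr h h1)
  · exact Or.inr (decrSlice_congr h h1)

lemma isRun_congr {A C : ℕ → ℝ} {m p q : ℕ} (hAC : ∀ t, t < m → A t = C t)
    (h : IsRun m C p q) : IsRun m A p q := by
  obtain ⟨h1, h2, h3, h4, h5⟩ := h
  have hsym : ∀ t, t < m → C t = A t := fun t ht => (hAC t ht).symm
  refine ⟨h1, h2, monoSlice_congr (fun t ht => hAC t (by omega)) h3, ?_, ?_⟩
  · rcases h4 with h4 | h4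
    · exact Or.inl h4
    · exact Or.inr (fun hm => h4 (monoSlice_congr (fun t ht => hsym t (by omega)) hm))
  · by_cases hq : q + 1 = m
    · exact Or.inl hq
    · rcases h5 with h5 | h5
      · exact Or.inl h5
      · exact Or.inr (fun hm => h5 (monoSlice_congr (fun t ht => hsym t (by omega)) hm))

/-! ### subsequence and sSup lemmas -/

lemma subseq_le_idx {a b m : ℕ} {idx : ℕ → ℕ} (h : IsSubseqIdx a b m idx) :
    ∀ t, t < m → t ≤ idx t := by
  intro t
  induction t with
  | zero => intro _; omega
  | succ t ih =>
    intro ht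
    have h1 := ih (by omega)
    have h2 := h.2 t (t+1) (by omega) ht
    omega

lemma subseq_bound {a b m : ℕ} {idx : ℕ → ℕ} (h : IsSubseqIdx a b m idx) : m ≤ b := by
  rcases Nat.eq_zero_or_pos m with h0 | h0
  · omega
  · have h1 := subseq_le_idx h (m-1) (by omega)
    have h2 := (h.1 (m-1) (by omega)).2
    omega

lemma lis_set_bddAbove (S : ℕ → ℝ) (a b : ℕ) :
    BddAbove {m | ∃ idx : ℕ → ℕ, IsSubseqIdx a b m idx ∧
      ∀ s t, s < t → t < m → S (idx s) < S (idx t)} :=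
  ⟨b, fun m hm => by obtain ⟨idx, h1, _⟩ := hm; exact subseq_bound h1⟩

lemma inc_set_bddAbove (k : ℕ) (S : ℕ → ℝ) (x : ℕ) :
    BddAbove {m | ∃ idx : ℕ → ℕ, IsSubseqIdx 0 x m idx ∧
      IsRollercoaster k m (fun t => S (idx t)) ∧ LastRunInc m (fun t => S (idx t))} :=
  ⟨x, fun m hm => by obtain ⟨idx, h1, _⟩ := hm; exact subseq_bound h1⟩

lemma dec_set_bddAbove (k : ℕ) (S : ℕ → ℝ) (x : ℕ) :
    BddAbove {m | ∃ idx : ℕ → ℕ, IsSubseqIdx 0 x m idx ∧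
      IsRollercoaster k m (fun t => S (idx t)) ∧ LastRunDec m (fun t => S (idx t))} :=
  ⟨x, fun m hm => by obtain ⟨idx, h1, _⟩ := hm; exact subseq_bound h1⟩



lemma distinct_adj {n x m : ℕ} {S : ℕ → ℝ} {idx : ℕ → ℕ} (hS : DistinctOn n S)
    (hx : x ≤ n) (hsub : IsSubseqIdx 0 x m idx) :
    ∀ t, t + 1 < m → S (idx t) ≠ S (idx (t + 1)) := by
  intro t ht heq
  have h1 : idx t < idx (t+1) := hsub.2 t (t+1) (by omega) ht
  have h2 : idx t < x := (hsub.1 t (by omega)).2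
  have h3 : idx (t+1) < x := (hsub.1 (t+1) ht).2
  have := hS _ _ (by omega) (by omega) heq
  omega

lemma glue_roller {C : ℕ → ℝ} {k M r : ℕ} (hk : 3 ≤ k)
    (hd : ∀ t, t + 1 < M → C t ≠ C (t + 1))
    (hkr : k ≤ r) (hrM : r + k ≤ M + 1)
    (htail : ∀ t, r - 1 ≤ t → t < M - 1 → EdgeUp C t)
    (hdownr : ¬ EdgeUp C (r - 2))
    (hprefix : ∀ p q, IsRun r C p q → k ≤ q + 1 - p) :
    IsRollercoaster k M C ∧ LastRunInc M C := by
  have hM2 : r + 2 ≤ M := by omega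
  constructor
  · intro p q hrun
    obtain ⟨hpq, hconst, hleft, hright⟩ := edges_of_isRun hd (by omega) hrun
    have hq' : q < M := hrun.2.1
    rcases Nat.lt_or_ge q r with hcase | hcase
    · have hrr : IsRun r C p q := by
        refine isRun_of_edges (fun t ht => hd t (by omega)) hpq hcase hconst hleft ?_
        rcases Nat.eq_or_lt_of_le (show q + 1 ≤ r by omega) with h1 | h1
        · exact Or.inl h1
        · rcases hright with h2 | h2
          · omega
          · exact Or.inr h2
      exact hprefix p q hrr
    · have hq1 : EdgeUp C (q-1) := htail (q-1) (by omega) (by omega)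
      have hEp : EdgeUp C p := (hconst (q-1) (by omega) (by omega)).mp hq1
      have hpge : r - 1 ≤ p := by
        by_contra hlt
        push_neg at hlt
        exact hdownr ((hconst (r-2) (by omega) (by omega)).mpr hEp)
      have hqM : q = M - 1 := by
        by_contra hne
        rcases hright with h2 | h2
        · omega
        · exact h2 ⟨fun _ => hEp, fun _ => htail q (by omega) (by omega)⟩
      have hpeq : p = r - 1 := by
        rcases hleft with h0 | h0
        · omega
        · by_contra hne
          exact h0 ⟨fun _ => hEp, fun _ => htail (p-1) (by omega) (by omega)⟩
      omega
  · refine ⟨by omega, r - 1, isRun_of_edges hd (by omega) (by omega)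
      (fun t ht ht' => iff_of_true (htail t (by omega) (by omega))
        (htail (r-1) (by omega) (by omega))) ?_ (Or.inl (by omega)),
      fun t ht ht' => htail t ht (by omega)⟩
    refine Or.inr (fun hiff => ?_)
    have e : r - 1 - 1 = r - 2 := by omega
    rw [e] at hiff
    exact hdownr (hiff.mpr (htail (r-1) (by omega) (by omega)))

lemma prefix_ext {C : ℕ → ℝ} {k D : ℕ} (hk : 3 ≤ k)
    (hd : ∀ t, t + 1 < D + 1 → C t ≠ C (t + 1)) (hD : k ≤ D)
    (hA : ∀ p q, IsRun D C p q → k ≤ q + 1 - p)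
    (hdown2 : ¬ EdgeUp C (D - 2)) (hdown1 : ¬ EdgeUp C (D - 1)) :
    ∀ p q, IsRun (D+1) C p q → k ≤ q + 1 - p := by
  intro p q hrun
  obtain ⟨hpq, hconst, hleft, hright⟩ := edges_of_isRun hd (by omega) hrun
  have hqD : q < D + 1 := hrun.2.1
  rcases Nat.lt_or_ge q D with hcase | hcase
  · have hrr : IsRun D C p q := by
      refine isRun_of_edges (fun t ht => hd t (by omega)) hpq hcase hconst hleft ?_
      rcases Nat.eq_or_lt_of_le (show q + 1 ≤ D by omega) with h1 | h1
      · exact Or.inl h1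
      · rcases hright with h2 | h2
        · omega
        · exact Or.inr h2
    exact hA p q hrr
  · have hq : D = q := by omega
    subst hq
    have hEp : ¬ EdgeUp C p := fun h =>
      hdown1 ((hconst (D-1) (by omega) (by omega)).mpr h)
    have hp2 : p ≤ D - 2 := by
      by_contra hlt
      have hpD : p = D - 1 := by omega
      rcases hleft with h0 | h0
      · omega
      · refine h0 ?_
        rw [hpD]
        have e : D - 1 - 1 = D - 2 := by omega
        rw [e]
        exact iff_of_false hdown2 hdown1
    have hrunA : IsRun D C p (D-1) := by
      refine isRun_of_edges (fun t ht => hd t (by omega)) (by omega) (by omega)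
        (fun t ht ht' => hconst t ht (by omega)) hleft (Or.inl (by omega))
    have := hA p (D-1) hrunA
    omega

lemma roller_of_incr {C : ℕ → ℝ} {k L : ℕ} (hk : 3 ≤ k) (hkL : k ≤ L)
    (hchain : ∀ s t, s < t → t < L → C s < C t) :
    IsRollercoaster k L C ∧ LastRunInc L C := by
  have hd : ∀ t, t + 1 < L → C t ≠ C (t+1) :=
    fun t ht => ne_of_lt (hchain t (t+1) (by omega) ht)
  have hup : ∀ t, t < L - 1 → EdgeUp C t :=
    fun t ht => hchain t (t+1) (by omega) (by omega)
  constructor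
  · intro p q hrun
    obtain ⟨hpq, hconst, hleft, hright⟩ := edges_of_isRun hd (by omega) hrun
    have hq' : q < L := hrun.2.1
    have hp0 : p = 0 := by
      rcases hleft with h | h
      · exact h
      · exact absurd (iff_of_true (hup (p-1) (by omega)) (hup p (by omega))) h
    have hq0 : q = L - 1 := by
      by_cases hq1 : q + 1 = L
      · omega
      · rcases hright with h | h
        · omega
        · exact absurd (iff_of_true (hup q (by omega)) (hup p (by omega))) h
    omega
  · exact ⟨by omega, 0, isRun_of_edges hd (by omega) (by omega)
      (fun t ht ht' => iff_of_true (hup t (by omega)) (hup 0 (by omega)))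
      (Or.inl rfl) (Or.inl (by omega)), fun t ht ht' => hup t (by omega)⟩

lemma incLen_ge {k x L a : ℕ} {S : ℕ → ℝ} {idx : ℕ → ℕ} (hk : 3 ≤ k) (hkL : k ≤ L)
    (hsub : IsSubseqIdx a x L idx)
    (hchain : ∀ s t, s < t → t < L → S (idx s) < S (idx t)) :
    L ≤ incLen k S x := by
  have hsub0 : IsSubseqIdx 0 x L idx :=
    ⟨fun t ht => ⟨Nat.zero_le _, (hsub.1 t ht).2⟩, hsub.2⟩
  have h := roller_of_incr (C := fun t => S (idx t)) hk hkL hchain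
  exact le_csSup (inc_set_bddAbove k S x) ⟨idx, hsub0, h.1, h.2⟩

lemma lis_attained (S : ℕ → ℝ) (a b : ℕ) :
    ∃ idx : ℕ → ℕ, IsSubseqIdx a b (LIS S a b) idx ∧
      ∀ s t, s < t → t < LIS S a b → S (idx s) < S (idx t) := by
  have hne : {m | ∃ idx : ℕ → ℕ, IsSubseqIdx a b m idx ∧
      ∀ s t, s < t → t < m → S (idx s) < S (idx t)}.Nonempty := by
    refine ⟨0, fun t => t, ⟨fun t ht => absurd ht (by omega),
      fun s t hst ht => absurd ht (by omega)⟩, fun s t hst ht => absurd ht (by omega)⟩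
  exact Nat.sSup_mem hne (lis_set_bddAbove S a b)

lemma decLen_attained {k x : ℕ} {S : ℕ → ℝ} (h : 0 < decLen k S x) :
    ∃ idx : ℕ → ℕ, IsSubseqIdx 0 x (decLen k S x) idx ∧
      IsRollercoaster k (decLen k S x) (fun t => S (idx t)) ∧
      LastRunDec (decLen k S x) (fun t => S (idx t)) := by
  by_cases hne : {m | ∃ idx : ℕ → ℕ, IsSubseqIdx 0 x m idx ∧
      IsRollercoaster k m (fun t => S (idx t)) ∧ LastRunDec m (fun t => S (idx t))}.Nonempty
  · exact Nat.sSup_mem hne (dec_set_bddAbove k S x)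
  · exfalso
    rw [Set.not_nonempty_iff_eq_empty] at hne
    have : decLen k S x = 0 := by
      unfold decLen; rw [hne]; exact csSup_empty
    omega

lemma incLen_attained {k x : ℕ} {S : ℕ → ℝ} (h : 0 < incLen k S x) :
    ∃ idx : ℕ → ℕ, IsSubseqIdx 0 x (incLen k S x) idx ∧
      IsRollercoaster k (incLen k S x) (fun t => S (idx t)) ∧
      LastRunInc (incLen k S x) (fun t => S (idx t)) := by
  by_cases hne : {m | ∃ idx : ℕ → ℕ, IsSubseqIdx 0 x m idx ∧
      IsRollercoaster k m (fun t => S (idx t)) ∧ LastRunInc m (fun t => S (idx t))}.Nonempty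
  · exact Nat.sSup_mem hne (inc_set_bddAbove k S x)
  · exfalso
    rw [Set.not_nonempty_iff_eq_empty] at hne
    have : incLen k S x = 0 := by
      unfold incLen; rw [hne]; exact csSup_empty
    omega

lemma lis_ge {S : ℕ → ℝ} {a b L : ℕ} {idx : ℕ → ℕ} (hsub : IsSubseqIdx a b L idx)
    (hchain : ∀ s t, s < t → t < L → S (idx s) < S (idx t)) : L ≤ LIS S a b :=
  le_csSup (lis_set_bddAbove S a b) ⟨idx, hsub, hchain⟩



lemma subseq_concat {x i' D L w M : ℕ} {idxA idxB idxC : ℕ → ℕ}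
    (hsubA : IsSubseqIdx 0 i' D idxA) (hsubB : IsSubseqIdx (i'-1) x L idxB)
    (hix : i' ≤ x) (hM : M = w + L) (hw : w ≤ D) (hDM : D ≤ M)
    (hidxC : ∀ t, idxC t = if t < D then idxA t else idxB (t - w))
    (hcross : ∀ t, D ≤ t → t < M → idxA (D-1) < idxB (t - w)) :
    IsSubseqIdx 0 x M idxC := by
  constructor
  · intro t ht
    rw [hidxC]
    by_cases hs : t < D
    · rw [if_pos hs]
      exact ⟨Nat.zero_le _, lt_of_lt_of_le (hsubA.1 t hs).2 hix⟩
    · rw [if_neg hs]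
      exact ⟨Nat.zero_le _, (hsubB.1 (t-w) (by omega)).2⟩
  · intro s t hst ht
    rw [hidxC, hidxC]
    by_cases hs : s < D
    · by_cases ht' : t < D
      · rw [if_pos hs, if_pos ht']
        exact hsubA.2 s t hst ht'
      · rw [if_pos hs, if_neg ht']
        have h1 : idxA s ≤ idxA (D-1) := by
          rcases Nat.eq_or_lt_of_le (show s ≤ D-1 by omega) with h | h
          · rw [h]
          · exact le_of_lt (hsubA.2 s (D-1) h (by omega))
        exact lt_of_le_of_lt h1 (hcross t (by omega) ht)
    · have ht2 : ¬ t < D := by omega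
      rw [if_neg hs, if_neg ht2]
      exact hsubB.2 (s-w) (t-w) (by omega) (by omega)

lemma cat_le {k n x i' : ℕ} {S : ℕ → ℝ} (hk : 3 ≤ k) (hS : DistinctOn n S)
    (hxn : x ≤ n) (hi1 : 1 ≤ i') (hix : i' < x)
    (hMk : (k:ℤ) ≤ Mmat S (i'-1) x) :
    decLen k S i' + (Mmat S (i'-1) x).toNat - 1 ≤ incLen k S x := by
  have hlt : i' - 1 < x := by omega
  have hMe : Mmat S (i'-1) x = (LIS S (i'-1) x : ℤ) := by
    unfold Mmat; rw [if_pos hlt]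
  rw [hMe] at hMk ⊢
  rw [Int.toNat_natCast]
  set L := LIS S (i'-1) x with hL
  have hkL : k ≤ L := by exact_mod_cast hMk
  obtain ⟨idxB, hsubB, hchainB⟩ := lis_attained S (i'-1) x
  rw [← hL] at hsubB hchainB
  by_cases hD0 : decLen k S i' = 0
  · rw [hD0]
    have := incLen_ge hk hkL hsubB hchainB
    omega
  · obtain ⟨idxA, hsubA, hrollA, hlastA⟩ := decLen_attained (Nat.pos_of_ne_zero hD0)
    set D := decLen k S i' with hD
    obtain ⟨hD1, p0, hrun0, hdec0⟩ := hlastA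
    have hDk : k ≤ D ∧ p0 + k ≤ D := by
      have := hrollA p0 (D-1) hrun0
      have h2 := hrun0.1
      omega
    have hu : idxA (D-1) < i' := (hsubA.1 (D-1) (by omega)).2
    have hvlb : i' - 1 ≤ idxB 0 := (hsubB.1 0 (by omega)).1
    have hvub : idxB 0 < x := (hsubB.1 0 (by omega)).2
    have huv : idxA (D-1) ≤ idxB 0 := by omega
    have hdownA : S (idxA (D-1)) < S (idxA (D-2)) := by
      have h := hdec0 (D-2) (by omega) (by omega)
      have e : D - 2 + 1 = D - 1 := by omega
      rw [e] at h
      exact h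
    have hixle : i' ≤ x := le_of_lt hix
    rcases Nat.eq_or_lt_of_le huv with hcase | hcase
    · -- shared element: u = v
      set M := D + L - 1 with hMdef
      set idxC : ℕ → ℕ := fun t => if t < D then idxA t else idxB (t - (D-1)) with hidxC
      have hidxC' : ∀ t, idxC t = if t < D then idxA t else idxB (t - (D-1)) :=
        fun t => rfl
      have hsubC : IsSubseqIdx 0 x M idxC := by
        refine subseq_concat hsubA hsubB hixle (by omega) (by omega) (by omega) hidxC'
          (fun t ht ht' => ?_)
        rw [hcase]
        exact hsubB.2 0 (t - (D-1)) (by omega) (by omega)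
      set C : ℕ → ℝ := fun t => S (idxC t) with hC
      have hdC : ∀ t, t + 1 < M → C t ≠ C (t+1) :=
        fun t ht => distinct_adj (S := S) hS hxn hsubC t ht
      have hAC : ∀ t, t < D → S (idxA t) = C t := by
        intro t ht
        show S (idxA t) = S (idxC t)
        rw [hidxC' t, if_pos ht]
      have hprefix : ∀ p q, IsRun D C p q → k ≤ q + 1 - p :=
        fun p q h => hrollA p q (isRun_congr hAC h)
      have htail : ∀ t, D - 1 ≤ t → t < M - 1 → EdgeUp C t := by
        intro t ht ht'
        show S (idxC t) < S (idxC (t+1))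
        rcases Nat.eq_or_lt_of_le ht with h1 | h1
        · rw [hidxC' t, hidxC' (t+1), ← h1]
          rw [if_pos (show D - 1 < D by omega), if_neg (show ¬ D - 1 + 1 < D by omega)]
          have e : D - 1 + 1 - (D - 1) = 1 := by omega
          rw [e, hcase]
          exact hchainB 0 1 (by omega) (by omega)
        · rw [hidxC' t, hidxC' (t+1),
            if_neg (show ¬ t < D by omega), if_neg (show ¬ t + 1 < D by omega)]
          have e : t + 1 - (D-1) = (t - (D-1)) + 1 := by omega
          rw [e]
          exact hchainB (t - (D-1)) (t - (D-1) + 1) (by omega) (by omega)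
      have hdownr : ¬ EdgeUp C (D - 2) := by
        intro h
        have h' : S (idxC (D-2)) < S (idxC (D-2+1)) := h
        rw [hidxC' (D-2), hidxC' (D-2+1), if_pos (show D - 2 < D by omega),
          if_pos (show D - 2 + 1 < D by omega)] at h'
        have e : D - 2 + 1 = D - 1 := by omega
        rw [e] at h'
        exact absurd h' (asymm hdownA)
      obtain ⟨hroll, hlast⟩ := glue_roller hk hdC hDk.1 (by omega) htail hdownr hprefix
      have : M ≤ incLen k S x := le_csSup (inc_set_bddAbove k S x) ⟨idxC, hsubC, hroll, hlast⟩
      omega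
    · -- u < v
      set M := D + L with hMdef
      set idxC : ℕ → ℕ := fun t => if t < D then idxA t else idxB (t - D) with hidxC
      have hidxC' : ∀ t, idxC t = if t < D then idxA t else idxB (t - D) :=
        fun t => rfl
      have hsubC : IsSubseqIdx 0 x M idxC := by
        refine subseq_concat hsubA hsubB hixle (by omega) (by omega) (by omega) hidxC'
          (fun t ht ht' => ?_)
        rcases Nat.eq_or_lt_of_le (show D ≤ t by omega) with h1 | h1
        · rw [← h1]
          simpa using hcase
        · exact lt_trans hcase (hsubB.2 0 (t - D) (by omega) (by omega))
      set C : ℕ → ℝ := fun t => S (idxC t) with hC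
      have hdC : ∀ t, t + 1 < M → C t ≠ C (t+1) :=
        fun t ht => distinct_adj (S := S) hS hxn hsubC t ht
      have hAC : ∀ t, t < D → S (idxA t) = C t := by
        intro t ht
        show S (idxA t) = S (idxC t)
        rw [hidxC' t, if_pos ht]
      have hprefix : ∀ p q, IsRun D C p q → k ≤ q + 1 - p :=
        fun p q h => hrollA p q (isRun_congr hAC h)
      have hdownr : ¬ EdgeUp C (D - 2) := by
        intro h
        have h' : S (idxC (D-2)) < S (idxC (D-2+1)) := h
        rw [hidxC' (D-2), hidxC' (D-2+1), if_pos (show D - 2 < D by omega),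
          if_pos (show D - 2 + 1 < D by omega)] at h'
        have e : D - 2 + 1 = D - 1 := by omega
        rw [e] at h'
        exact absurd h' (asymm hdownA)
      have htailD : ∀ t, D ≤ t → t < M - 1 → EdgeUp C t := by
        intro t ht ht'
        show S (idxC t) < S (idxC (t+1))
        rw [hidxC' t, hidxC' (t+1),
          if_neg (show ¬ t < D by omega), if_neg (show ¬ t + 1 < D by omega)]
        have e : t + 1 - D = (t - D) + 1 := by omega
        rw [e]
        exact hchainB (t - D) (t - D + 1) (by omega) (by omega)
      have hCD1 : C (D-1) = S (idxA (D-1)) := (hAC (D-1) (by omega)).symm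
      have hCD : C D = S (idxB 0) := by
        show S (idxC D) = S (idxB 0)
        rw [hidxC' D, if_neg (by omega)]
        norm_num
      rcases lt_or_gt_of_ne (fun h => by
          have := hS (idxA (D-1)) (idxB 0) (by omega) (by omega) h
          omega) with hsv | hsv
      · -- S u < S v : prefix of length D, junction edge up
        have htail : ∀ t, D - 1 ≤ t → t < M - 1 → EdgeUp C t := by
          intro t ht ht'
          rcases Nat.eq_or_lt_of_le ht with h1 | h1
          · show C t < C (t+1)
            rw [← h1, hCD1]
            have e : D - 1 + 1 = D := by omega
            rw [e, hCD]
            exact hsv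
          · exact htailD t (by omega) ht'
        obtain ⟨hroll, hlast⟩ := glue_roller hk hdC hDk.1 (by omega) htail hdownr hprefix
        have : M ≤ incLen k S x := le_csSup (inc_set_bddAbove k S x) ⟨idxC, hsubC, hroll, hlast⟩
        omega
      · -- S v < S u : prefix of length D+1
        have hdown1 : ¬ EdgeUp C (D - 1) := by
          intro h
          have h' : C (D-1) < C (D-1+1) := h
          have e : D - 1 + 1 = D := by omega
          rw [e, hCD1, hCD] at h'
          exact absurd h' (asymm hsv)
        have hprefix' : ∀ p q, IsRun (D+1) C p q → k ≤ q + 1 - p :=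
          prefix_ext hk (fun t ht => hdC t (by omega)) hDk.1 hprefix hdownr hdown1
        have htail' : ∀ t, (D+1) - 1 ≤ t → t < M - 1 → EdgeUp C t := by
          intro t ht ht'
          exact htailD t (by omega) ht'
        have hdownr' : ¬ EdgeUp C ((D+1) - 2) := by
          have e : D + 1 - 2 = D - 1 := by omega
          rw [e]
          exact hdown1
        obtain ⟨hroll, hlast⟩ := glue_roller hk hdC (show k ≤ D + 1 by omega) (by omega)
          htail' hdownr' hprefix'
        have : M ≤ incLen k S x := le_csSup (inc_set_bddAbove k S x) ⟨idxC, hsubC, hroll, hlast⟩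
        omega



lemma subseq_add {a b m : ℕ} {idx : ℕ → ℕ} (h : IsSubseqIdx a b m idx) :
    ∀ s d, s + d < m → idx s + d ≤ idx (s + d) := by
  intro s d
  induction d with
  | zero => intro _; simp
  | succ d ih =>
    intro hd
    have h1 := ih (by omega)
    have h2 := h.2 (s+d) (s+d+1) (by omega) (by omega)
    have e : s + (d+1) = s + d + 1 := by omega
    rw [e]
    omega

/-- For all `1 ≤ j ≤ i ≤ n` with `j > i - k + 1`, one has `inc_j[i] = inc[i]`. -/
theorem stmt11 (k n : ℕ) (hk : 3 ≤ k) (S : ℕ → ℝ) (hS : DistinctOn n S)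
    (i j : ℕ) (hj1 : 1 ≤ j) (hji : j ≤ i) (hin : i ≤ n)
    (hjk : (i : ℤ) - (k : ℤ) + 1 < (j : ℤ)) :
    incD k S j i = incLen k S i := by
  have hx0 : 1 ≤ i := le_trans hj1 hji
  apply le_antisymm
  · -- incD ≤ incLen
    apply max_le
    · apply Finset.sup_le
      intro i' hi'
      rw [Finset.mem_filter] at hi'
      obtain ⟨hmem, hcond⟩ := hi'
      rw [Finset.mem_Icc] at hmem
      exact cat_le hk hS hin hmem.1 (by omega) hcond
    · by_cases h : (k:ℤ) ≤ Mmat S 0 i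
      · rw [if_pos h]
        have hMe : Mmat S 0 i = (LIS S 0 i : ℤ) := by
          unfold Mmat; rw [if_pos (show 0 < i by omega)]
        rw [hMe] at h ⊢
        rw [Int.toNat_natCast]
        obtain ⟨idxB, hsubB, hchainB⟩ := lis_attained S 0 i
        exact incLen_ge hk (by exact_mod_cast h) hsubB hchainB
      · rw [if_neg h]
        exact Nat.zero_le _
  · -- incLen ≤ incD
    by_cases hN0 : incLen k S i = 0
    · rw [hN0]; exact Nat.zero_le _
    obtain ⟨idx, hsub, hroll, hlast⟩ := incLen_attained (Nat.pos_of_ne_zero hN0)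
    set N := incLen k S i with hN
    obtain ⟨hN1, p, hrun, hincr⟩ := hlast
    have hkNp : p + k ≤ N := by
      have h1 := hroll p (N-1) hrun
      have h2 := hrun.1
      omega
    have hdA : ∀ t, t + 1 < N → (fun t => S (idx t)) t ≠ (fun t => S (idx t)) (t+1) :=
      fun t ht => distinct_adj (S := S) hS hin hsub t ht
    by_cases hp0 : p = 0
    · subst hp0
      have hchain : ∀ s t, s < t → t < N → S (idx s) < S (idx t) := by
        intro s t hst ht
        exact incr_chain hincr t s (Nat.zero_le _) hst (by omega)
      have hLIS : N ≤ LIS S 0 i := lis_ge hsub hchain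
      have hMe : Mmat S 0 i = (LIS S 0 i : ℤ) := by
        unfold Mmat; rw [if_pos (show 0 < i by omega)]
      have hcond : (k:ℤ) ≤ Mmat S 0 i := by
        rw [hMe]; exact_mod_cast le_trans (show k ≤ N by omega) hLIS
      have h1 : N ≤ (Mmat S 0 i).toNat := by
        rw [hMe, Int.toNat_natCast]; exact hLIS
      unfold incD
      rw [if_pos hcond]
      exact le_max_of_le_right h1
    · -- p ≥ 1
      obtain ⟨hpq, hconst, hleft, hright⟩ := edges_of_isRun hdA (by omega) hrun
      have hqN : p < N - 1 := hpq
      have hEp : EdgeUp (fun t => S (idx t)) p := hincr p (le_refl _) hpq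
      have hEp1 : ¬ EdgeUp (fun t => S (idx t)) (p-1) := by
        rcases hleft with h | h
        · exact absurd h hp0
        · exact fun hup => h (iff_of_true hup hEp)
      have hidxp : idx p < i := (hsub.1 p (by omega)).2
      set i' := idx p + 1 with hi'
      have hsubP : IsSubseqIdx 0 i' (p+1) idx := by
        constructor
        · intro t ht
          refine ⟨Nat.zero_le _, ?_⟩
          rcases Nat.eq_or_lt_of_le (show t ≤ p by omega) with h1 | h1
          · rw [h1]; omega
          · have := hsub.2 t p h1 (by omega)
            omega
        · exact fun s t hst ht => hsub.2 s t hst (by omega)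
      have hdP : ∀ t, t + 1 < p + 1 → (fun t => S (idx t)) t ≠ (fun t => S (idx t)) (t+1) :=
        fun t ht => hdA t (by omega)
      have hEa_of : ∀ a b, IsRun (p+1) (fun t => S (idx t)) a b → b = p →
          IsRun N (fun t => S (idx t)) a b := by
        intro a b hrunP hb
        obtain ⟨hab, hconstP, hleftP, hrightP⟩ := edges_of_isRun hdP (by omega) hrunP
        refine isRun_of_edges hdA hab (by omega) hconstP hleftP ?_
        refine Or.inr (fun hiff => ?_)
        have hEb1 : ¬ EdgeUp (fun t => S (idx t)) (b-1) := by rw [hb]; exact hEp1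
        have hEa : ¬ EdgeUp (fun t => S (idx t)) a :=
          fun hup => hEb1 ((hconstP (b-1) (by omega) (by omega)).mpr hup)
        have hEb : EdgeUp (fun t => S (idx t)) b := by rw [hb]; exact hEp
        exact hEa (hiff.mp hEb)
      have hrollP : IsRollercoaster k (p+1) (fun t => S (idx t)) := by
        intro a b hrunP
        have hbp : b ≤ p := by have := hrunP.2.1; omega
        rcases Nat.eq_or_lt_of_le hbp with h1 | h1
        · exact hroll a b (hEa_of a b hrunP h1)
        · obtain ⟨hab, hconstP, hleftP, hrightP⟩ := edges_of_isRun hdP (by omega) hrunP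
          have : IsRun N (fun t => S (idx t)) a b := by
            refine isRun_of_edges hdA hab (by omega) hconstP hleftP ?_
            rcases hrightP with h2 | h2
            · omega
            · exact Or.inr h2
          exact hroll a b this
      have hlastP : LastRunDec (p+1) (fun t => S (idx t)) := by
        refine ⟨by omega, ?_⟩
        obtain ⟨a, b, hrunP, hab1, hab2⟩ :=
          exists_run_through_edge hdP (show p - 1 + 1 < p + 1 by omega)
        have hb : b = p := by
          have := hrunP.2.1
          omega
        subst hb
        refine ⟨a, hrunP, ?_⟩
        obtain ⟨hab, hconstP, _, _⟩ := edges_of_isRun hdP (by omega) hrunP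
        have hEa : ¬ EdgeUp (fun t => S (idx t)) a :=
          fun hup => hEp1 ((hconstP (b-1) (by omega) (by omega)).mpr hup)
        intro t htt htt'
        have hnt : ¬ EdgeUp (fun t => S (idx t)) t :=
          fun hup => hEa ((hconstP t htt (by omega)).mp hup)
        have hne : S (idx (t+1)) ≠ S (idx t) := (hdA t (by omega)).symm
        exact lt_of_le_of_ne (le_of_not_gt hnt) hne
      have hdecP : p + 1 ≤ decLen k S i' :=
        le_csSup (dec_set_bddAbove k S i') ⟨idx, hsubP, hrollP, hlastP⟩
      have hsubB : IsSubseqIdx (i'-1) i (N - p) (fun s => idx (p + s)) := by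
        constructor
        · intro t ht
          constructor
          · show i' - 1 ≤ idx (p + t)
            rcases Nat.eq_zero_or_pos t with h1 | h1
            · subst h1
              rw [Nat.add_zero]
              omega
            · have := hsub.2 p (p+t) (by omega) (by omega)
              omega
          · show idx (p + t) < i
            exact (hsub.1 (p+t) (by omega)).2
        · intro s t hst ht
          exact hsub.2 (p+s) (p+t) (by omega) (by omega)
      have hchainB : ∀ s t, s < t → t < N - p →
          S ((fun s => idx (p + s)) s) < S ((fun s => idx (p + s)) t) := by
        intro s t hst ht
        exact incr_chain hincr (p+t) (p+s) (by omega) (by omega) (by omega)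
      have hLISB : N - p ≤ LIS S (i'-1) i := lis_ge hsubB hchainB
      have hMe : Mmat S (i'-1) i = (LIS S (i'-1) i : ℤ) := by
        unfold Mmat; rw [if_pos (by omega)]
      have hcond : (k:ℤ) ≤ Mmat S (i'-1) i := by
        rw [hMe]
        exact_mod_cast le_trans (show k ≤ N - p by omega) hLISB
      have hiub : idx p + k ≤ i := by
        have h1 := subseq_add hsub p (N-1-p) (by omega)
        have e : p + (N-1-p) = N-1 := by omega
        rw [e] at h1
        have h2 : idx (N-1) < i := (hsub.1 (N-1) (by omega)).2
        omega
      have hmemI : i' ∈ Finset.filter (fun i'' => (k : ℤ) ≤ Mmat S (i'' - 1) i)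
          (Finset.Icc 1 (j - 1)) := by
        rw [Finset.mem_filter, Finset.mem_Icc]
        exact ⟨⟨by omega, by omega⟩, hcond⟩
      have hterm : N ≤ decLen k S i' + (Mmat S (i'-1) i).toNat - 1 := by
        rw [hMe, Int.toNat_natCast]
        omega
      have hsup := Finset.le_sup (f := fun i'' => decLen k S i'' +
        (Mmat S (i'' - 1) i).toNat - 1) hmemI
      exact le_max_of_le_left (le_trans hterm hsup)

end Rollercoaster
end

section
/- Every permutation S in U, viewed as the sequence (S(1),…,S(n)), satisfies LDS(S) ≤ k − 1, and the length of a longest k-rollercoaster in S equals kn/(3k−3). -/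
namespace Gamma

/-- `P` is a permutation of `{1, ..., n}` (normalized to `0` outside `[1, n]`). -/
def IsPerm (n : ℕ) (P : ℕ → ℕ) : Prop :=
  (∀ p, 1 ≤ p → p ≤ n → 1 ≤ P p ∧ P p ≤ n) ∧
  (∀ p q, 1 ≤ p → p ≤ n → 1 ≤ q → q ≤ n → P p = P q → p = q) ∧
  (∀ p, ¬ (1 ≤ p ∧ p ≤ n) → P p = 0)

/-- `f` assigns each middle position `p ∈ {ℓ+1, ..., n-ℓ}` a part index in `{1, ..., ℓ}`. -/
def GammaValid (n l : ℕ) (f : ℕ → ℕ) : Prop :=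
  ∀ p, l + 1 ≤ p → p ≤ n - l → 1 ≤ f p ∧ f p ≤ l

/-- The index of the part containing position `p`: part `P_i` contains positions `i`
and `n - ℓ + i`, and each middle position `p` with `f p = i`. -/
def partOf (n l : ℕ) (f : ℕ → ℕ) (p : ℕ) : ℕ :=
  if p ≤ l then p else if n - l + 1 ≤ p then p - (n - l) else f p

/-- `P` is the permutation `P_f` of `{1, ..., n}` determined by `f`: along each part
(in increasing position order) the values strictly decrease, and all values on part
`P_i` are smaller than all values on part `P_j` whenever `i < j`. -/
def IsGammaPerm (n l : ℕ) (f : ℕ → ℕ) (P : ℕ → ℕ) : Prop :=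
  IsPerm n P ∧
  (∀ p q, 1 ≤ p → p < q → q ≤ n → partOf n l f p = partOf n l f q → P q < P p) ∧
  (∀ p q, 1 ≤ p → p ≤ n → 1 ≤ q → q ≤ n → partOf n l f p < partOf n l f q → P p < P q)

/-- Length of a longest strictly increasing subsequence of `P` on positions `[a, b)`. -/
noncomputable def LISnat (P : ℕ → ℕ) (a b : ℕ) : ℕ :=
  sSup {m | ∃ idx : ℕ → ℕ,
    (∀ t, t < m → a ≤ idx t ∧ idx t < b) ∧
    (∀ s t, s < t → t < m → idx s < idx t) ∧
    (∀ s t, s < t → t < m → P (idx s) < P (idx t))}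

/-- Length of a longest strictly decreasing subsequence of `P` on positions `[a, b)`. -/
noncomputable def LDSnat (P : ℕ → ℕ) (a b : ℕ) : ℕ :=
  sSup {m | ∃ idx : ℕ → ℕ,
    (∀ t, t < m → a ≤ idx t ∧ idx t < b) ∧
    (∀ s t, s < t → t < m → idx s < idx t) ∧
    (∀ s t, s < t → t < m → P (idx t) < P (idx s))}

/-- The contiguous slice `A p, ..., A q` is strictly increasing. -/
def IncrSliceN (A : ℕ → ℕ) (p q : ℕ) : Prop :=
  ∀ t, p ≤ t → t < q → A t < A (t + 1)

/-- The contiguous slice `A p, ..., A q` is strictly decreasing. -/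
def DecrSliceN (A : ℕ → ℕ) (p q : ℕ) : Prop :=
  ∀ t, p ≤ t → t < q → A (t + 1) < A t

/-- The contiguous slice `A p, ..., A q` is strictly monotone. -/
def MonoSliceN (A : ℕ → ℕ) (p q : ℕ) : Prop :=
  IncrSliceN A p q ∨ DecrSliceN A p q

/-- `[p, q]` is a run of the length-`m` sequence `A 0, ..., A (m-1)`. -/
def IsRunN (m : ℕ) (A : ℕ → ℕ) (p q : ℕ) : Prop :=
  p ≤ q ∧ q < m ∧ MonoSliceN A p q ∧
    (p = 0 ∨ ¬ MonoSliceN A (p - 1) q) ∧ (q + 1 = m ∨ ¬ MonoSliceN A p (q + 1))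

/-- Every run of the length-`m` sequence `A 0, ..., A (m-1)` has length at least `k`. -/
def IsRollercoasterN (k m : ℕ) (A : ℕ → ℕ) : Prop :=
  ∀ p q, IsRunN m A p q → k ≤ q + 1 - p

/-- Length of a longest `k`-rollercoaster that is a subsequence of
`S 1, S 2, ..., S n` (positions `1, ..., n`). -/
noncomputable def maxRCnat (k n : ℕ) (S : ℕ → ℕ) : ℕ :=
  sSup {m | ∃ idx : ℕ → ℕ,
    ((∀ t, t < m → 1 ≤ idx t ∧ idx t < n + 1) ∧ ∀ s t, s < t → t < m → idx s < idx t) ∧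
    IsRollercoasterN k m (fun t => S (idx t))}

/-- The `b`-th block of `S` (blocks of length `3k-3`), shifted so as to be
a sequence of values in `{1, ..., 3k-3}` on positions `{1, ..., 3k-3}`
(normalized to `0` elsewhere). -/
def shiftBlock (k b : ℕ) (S : ℕ → ℕ) : ℕ → ℕ :=
  fun p => if 1 ≤ p ∧ p ≤ 3 * k - 3 then S (b * (3 * k - 3) + p) - b * (3 * k - 3) else 0

/-- `S` belongs to the family `U`: `S` is a permutation of `{1, ..., n}` and every
block of length `3k-3`, after shifting, is a permutation from the family `Γ` with
parameters `n' = 3k-3` and `ℓ = k`. -/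
def InU (k n : ℕ) (S : ℕ → ℕ) : Prop :=
  IsPerm n S ∧
  ∀ b, b < n / (3 * k - 3) →
    ∃ f, GammaValid (3 * k - 3) k f ∧ IsGammaPerm (3 * k - 3) k f (shiftBlock k b S)

-- ### helpers


private lemma partOf_low {k : ℕ} {f : ℕ → ℕ} {p : ℕ} (h2 : p ≤ k) :
    partOf (3*k-3) k f p = p := by
  unfold partOf; rw [if_pos h2]

private lemma partOf_high {k : ℕ} (hk : 4 ≤ k) {f : ℕ → ℕ} {p : ℕ} (h1 : 2*k-2 ≤ p) :
    partOf (3*k-3) k f p = p - (2*k-3) := by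
  unfold partOf
  rw [if_neg (by omega), if_pos (by omega)]
  omega

private lemma partOf_mid {k : ℕ} (hk : 4 ≤ k) {f : ℕ → ℕ} {p : ℕ}
    (h1 : k+1 ≤ p) (h2 : p ≤ 2*k-3) :
    partOf (3*k-3) k f p = f p := by
  unfold partOf; rw [if_neg (by omega), if_neg (by omega)]

private lemma partOf_range {k : ℕ} (hk : 4 ≤ k) {f : ℕ → ℕ} (hf : GammaValid (3*k-3) k f)
    {p : ℕ} (h1 : 1 ≤ p) (h2 : p ≤ 3*k-3) :
    1 ≤ partOf (3*k-3) k f p ∧ partOf (3*k-3) k f p ≤ k := by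
  rcases le_or_gt p k with h | h
  · rw [partOf_low h]; omega
  rcases le_or_gt (2*k-2) p with h' | h'
  · rw [partOf_high hk h']; omega
  · rw [partOf_mid hk (by omega) (by omega)]
    exact hf p (by omega) (by omega)

/-- value range of a block -/
private lemma block_val {k : ℕ} (hk : 4 ≤ k) {b : ℕ} {S : ℕ → ℕ} {f : ℕ → ℕ}
    (hG : IsGammaPerm (3*k-3) k f (shiftBlock k b S)) {p : ℕ}
    (h1 : 1 ≤ p) (h2 : p ≤ 3*k-3) :
    b*(3*k-3) + 1 ≤ S (b*(3*k-3) + p) ∧ S (b*(3*k-3) + p) ≤ b*(3*k-3) + (3*k-3) := by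
  obtain ⟨⟨hrange, -, -⟩, -, -⟩ := hG
  have h := hrange p h1 h2
  simp only [shiftBlock] at h
  rw [if_pos ⟨h1, h2⟩] at h
  omega

/-- shifted value at an in-block position -/
private lemma shiftBlock_eval {k : ℕ} {b : ℕ} {S : ℕ → ℕ} {p : ℕ}
    (h1 : 1 ≤ p) (h2 : p ≤ 3*k-3) :
    shiftBlock k b S p = S (b*(3*k-3) + p) - b*(3*k-3) := by
  simp only [shiftBlock]; rw [if_pos ⟨h1, h2⟩]

private lemma pos_decomp {N c q : ℕ} (hN : 0 < N) (h1 : 1 ≤ q) (h2 : q ≤ N * c) :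
    ∃ b p, b < c ∧ 1 ≤ p ∧ p ≤ N ∧ q = b*N + p := by
  have hdm : N * ((q-1)/N) + (q-1)%N = q - 1 := Nat.div_add_mod _ _
  have hmod : (q-1)%N < N := Nat.mod_lt _ hN
  have hcm : ((q-1)/N)*N = N*((q-1)/N) := Nat.mul_comm _ _
  refine ⟨(q-1)/N, (q-1)%N + 1, ?_, by omega, by omega, by omega⟩
  by_contra h
  have : N * c ≤ N * ((q-1)/N) := Nat.mul_le_mul_left N (by omega)
  omega

/-- blocks are ordered along positions -/
private lemma block_le_of_pos {N b b' p p' : ℕ} (hp : 1 ≤ p) (hp2 : p ≤ N)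
    (hq : 1 ≤ p') (hq2 : p' ≤ N) (h : b*N + p < b'*N + p') : b ≤ b' := by
  by_contra h'
  have h2 : (b'+1)*N ≤ b*N := Nat.mul_le_mul_right N (by omega)
  have h3 : (b'+1)*N = b'*N + N := by ring
  omega

private lemma pairwise_of_consec {A : ℕ → ℕ} {m : ℕ}
    (h : ∀ t, t + 1 < m → A t < A (t+1)) :
    ∀ s t, s < t → t < m → A s < A t := by
  intro s t hst htm
  induction t with
  | zero => omega
  | succ t ih =>
    rcases Nat.lt_or_ge s t with h' | h'
    · exact lt_trans (ih h' (by omega)) (h t htm)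
    · have hst' : s = t := by omega
      subst hst'; exact h s htm

private lemma pairwise_of_decr {A : ℕ → ℕ} {a b : ℕ} (h : DecrSliceN A a b) :
    ∀ s t, a ≤ s → s < t → t ≤ b → A t < A s := by
  intro s t has hst htb
  induction t with
  | zero => omega
  | succ t ih =>
    rcases Nat.lt_or_ge s t with h' | h'
    · exact lt_trans (h t (by omega) (by omega)) (ih h' (by omega))
    · have hst' : s = t := by omega
      subst hst'; exact h s (by omega) (by omega)




private lemma lds_bound {k n c : ℕ} (hk : 4 ≤ k) (hn : n = (3*k-3) * c)
    {S : ℕ → ℕ} (hU : InU k n S)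
    {m : ℕ} {idx : ℕ → ℕ}
    (hpos : ∀ t, t < m → 1 ≤ idx t ∧ idx t ≤ n)
    (hmono : ∀ s t, s < t → t < m → idx s < idx t)
    (hdec : ∀ s t, s < t → t < m → S (idx t) < S (idx s)) :
    m ≤ k - 1 := by
  rcases Nat.eq_zero_or_pos m with rfl | hm
  · omega
  have hquot : n / (3*k-3) = c := by rw [hn]; exact Nat.mul_div_cancel_left c (by omega)
  have Hdec : ∀ t, ∃ b p, t < m → b < c ∧ 1 ≤ p ∧ p ≤ 3*k-3 ∧ idx t = b*(3*k-3) + p := by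
    intro t
    by_cases ht : t < m
    · obtain ⟨b, p, h⟩ := pos_decomp (N := 3*k-3) (c := c) (by omega) (hpos t ht).1
        (by rw [← hn]; exact (hpos t ht).2)
      exact ⟨b, p, fun _ => h⟩
    · exact ⟨0, 1, fun h => absurd h ht⟩
  choose bf pf hbp using Hdec
  have Hgam : ∀ b, ∃ f, b < c →
      GammaValid (3*k-3) k f ∧ IsGammaPerm (3*k-3) k f (shiftBlock k b S) := by
    intro b
    by_cases hb : b < c
    · obtain ⟨f, hf⟩ := hU.2 b (by omega)
      exact ⟨f, fun _ => hf⟩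
    · exact ⟨id, fun h => absurd h hb⟩
  choose F hF using Hgam
  have hval : ∀ t, t < m →
      bf t*(3*k-3) + 1 ≤ S (idx t) ∧ S (idx t) ≤ bf t*(3*k-3) + (3*k-3) := by
    intro t ht
    obtain ⟨hb, h1, h2, heq⟩ := hbp t ht
    rw [heq]
    exact block_val hk (hF (bf t) hb).2 h1 h2
  have hbeq : ∀ t, t < m → bf t = bf 0 := by
    intro t ht
    rcases Nat.eq_zero_or_pos t with rfl | ht0
    · rfl
    obtain ⟨hbt, hp1t, hp2t, heqt⟩ := hbp t ht
    obtain ⟨hb0, hp10, hp20, heq0⟩ := hbp 0 hm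
    have hle : bf 0 ≤ bf t := by
      have h := hmono 0 t ht0 ht
      rw [heq0, heqt] at h
      exact block_le_of_pos hp10 hp20 hp1t hp2t h
    have hv := hdec 0 t ht0 ht
    have hv0 := hval 0 hm
    have hvt := hval t ht
    by_contra hne
    have h2 : (bf 0+1)*(3*k-3) ≤ bf t*(3*k-3) := Nat.mul_le_mul_right _ (by omega)
    have h3 : (bf 0+1)*(3*k-3) = bf 0*(3*k-3) + (3*k-3) := by ring
    omega
  set b0 := bf 0 with hb0def
  have hb0c : b0 < c := (hbp 0 hm).1
  obtain ⟨hfv, hG⟩ := hF b0 hb0c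
  have hsv : ∀ t, t < m → shiftBlock k b0 S (pf t) = S (idx t) - b0*(3*k-3) := by
    intro t ht
    obtain ⟨hb, h1, h2, heq⟩ := hbp t ht
    rw [shiftBlock_eval h1 h2, ← hbeq t ht, ← heq]
  have hpi : ∀ s t, s < t → t < m →
      partOf (3*k-3) k (F b0) (pf t) ≤ partOf (3*k-3) k (F b0) (pf s) := by
    intro s t hst htm
    by_contra hcon
    have hbs := hbp s (by omega)
    have hbt := hbp t htm
    have hcmp := hG.2.2 (pf s) (pf t) hbs.2.1 hbs.2.2.1 hbt.2.1 hbt.2.2.1 (by omega)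
    rw [hsv s (by omega), hsv t htm] at hcmp
    have hvs := hval s (by omega)
    have hvt := hval t htm
    rw [hbeq s (by omega)] at hvs
    rw [hbeq t htm] at hvt
    have hd := hdec s t hst htm
    omega
  have hppos : ∀ s t, s < t → t < m → pf s < pf t := by
    intro s t hst htm
    have h := hmono s t hst htm
    rw [(hbp s (by omega)).2.2.2, (hbp t htm).2.2.2, hbeq s (by omega), hbeq t htm] at h
    omega
  set g : ℕ → ℕ := fun t => if pf t ≤ k then 0 else if 2*k-2 ≤ pf t then k-2 else pf t - k
    with hgdef
  have key : ∀ s t, s < t → t < m → g s ≠ g t := by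
    intro s t hst htm hg
    have hps := (hbp s (by omega)).2
    have hpt := (hbp t htm).2
    have hπ := hpi s t hst htm
    have hpp := hppos s t hst htm
    simp only [hgdef] at hg
    by_cases h1 : pf s ≤ k
    · by_cases h2 : pf t ≤ k
      · rw [partOf_low h1, partOf_low h2] at hπ; omega
      · rw [if_pos h1, if_neg h2] at hg
        by_cases h3 : 2*k-2 ≤ pf t
        · rw [if_pos h3] at hg; omega
        · rw [if_neg h3] at hg; omega
    · by_cases h2 : pf t ≤ k
      · omega
      rw [if_neg h1, if_neg h2] at hg
      by_cases h3 : 2*k-2 ≤ pf s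
      · by_cases h4 : 2*k-2 ≤ pf t
        · rw [partOf_high hk h3, partOf_high hk h4] at hπ; omega
        · omega
      · by_cases h4 : 2*k-2 ≤ pf t
        · rw [if_neg h3, if_pos h4] at hg; omega
        · rw [if_neg h3, if_neg h4] at hg; omega
  have hinj : Set.InjOn g (Finset.range m) := by
    intro s hs t ht hg
    simp only [Finset.coe_range, Set.mem_Iio] at hs ht
    rcases Nat.lt_trichotomy s t with h | h | h
    · exact absurd hg (key s t h ht)
    · exact h
    · exact absurd hg.symm (key t s h hs)
  have hmaps : ∀ t ∈ Finset.range m, g t ∈ Finset.range (k-1) := by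
    intro t ht
    simp only [Finset.mem_range] at ht ⊢
    have hpt := (hbp t ht).2
    simp only [hgdef]
    by_cases h1 : pf t ≤ k
    · rw [if_pos h1]; omega
    by_cases h2 : 2*k-2 ≤ pf t
    · rw [if_neg h1, if_pos h2]; omega
    · rw [if_neg h1, if_neg h2]; omega
  have hcard := Finset.card_le_card_of_injOn g hmaps hinj
  simpa using hcard


private lemma lis_bound {k n c : ℕ} (hk : 4 ≤ k) (hn : n = (3*k-3) * c)
    {S : ℕ → ℕ} (hU : InU k n S)
    {m : ℕ} {idx : ℕ → ℕ}
    (hpos : ∀ t, t < m → 1 ≤ idx t ∧ idx t ≤ n)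
    (hmono : ∀ s t, s < t → t < m → idx s < idx t)
    (hinc : ∀ s t, s < t → t < m → S (idx s) < S (idx t)) :
    m ≤ k * c := by
  rcases Nat.eq_zero_or_pos m with rfl | hm
  · omega
  have hquot : n / (3*k-3) = c := by rw [hn]; exact Nat.mul_div_cancel_left c (by omega)
  have Hdec : ∀ t, ∃ b p, t < m → b < c ∧ 1 ≤ p ∧ p ≤ 3*k-3 ∧ idx t = b*(3*k-3) + p := by
    intro t
    by_cases ht : t < m
    · obtain ⟨b, p, h⟩ := pos_decomp (N := 3*k-3) (c := c) (by omega) (hpos t ht).1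
        (by rw [← hn]; exact (hpos t ht).2)
      exact ⟨b, p, fun _ => h⟩
    · exact ⟨0, 1, fun h => absurd h ht⟩
  choose bf pf hbp using Hdec
  have Hgam : ∀ b, ∃ f, b < c →
      GammaValid (3*k-3) k f ∧ IsGammaPerm (3*k-3) k f (shiftBlock k b S) := by
    intro b
    by_cases hb : b < c
    · obtain ⟨f, hf⟩ := hU.2 b (by omega)
      exact ⟨f, fun _ => hf⟩
    · exact ⟨id, fun h => absurd h hb⟩
  choose F hF using Hgam
  have hble : ∀ s t, s < t → t < m → bf s ≤ bf t := by
    intro s t hst htm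
    have h := hmono s t hst htm
    have hs := hbp s (by omega)
    have ht := hbp t htm
    rw [hs.2.2.2, ht.2.2.2] at h
    exact block_le_of_pos hs.2.1 hs.2.2.1 ht.2.1 ht.2.2.1 h
  have hπrange : ∀ t, t < m →
      1 ≤ partOf (3*k-3) k (F (bf t)) (pf t) ∧ partOf (3*k-3) k (F (bf t)) (pf t) ≤ k := by
    intro t ht
    obtain ⟨hb, h1, h2, heq⟩ := hbp t ht
    exact partOf_range hk (hF (bf t) hb).1 h1 h2
  have hπmono : ∀ s t, s < t → t < m → bf s = bf t →
      partOf (3*k-3) k (F (bf t)) (pf s) < partOf (3*k-3) k (F (bf t)) (pf t) := by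
    intro s t hst htm hbeq
    obtain ⟨hbs, h1s, h2s, heqs⟩ := hbp s (by omega)
    obtain ⟨hbt, h1t, h2t, heqt⟩ := hbp t htm
    have hG := (hF (bf t) hbt).2
    have hsvs : shiftBlock k (bf t) S (pf s) = S (idx s) - bf t*(3*k-3) := by
      rw [shiftBlock_eval h1s h2s, ← hbeq, ← heqs]
    have hsvt : shiftBlock k (bf t) S (pf t) = S (idx t) - bf t*(3*k-3) := by
      rw [shiftBlock_eval h1t h2t, ← heqt]
    have hvs : bf t*(3*k-3) + 1 ≤ S (idx s) ∧ S (idx s) ≤ bf t*(3*k-3) + (3*k-3) := by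
      rw [← hbeq, heqs]
      exact block_val hk (hF (bf s) hbs).2 h1s h2s
    have hvt : bf t*(3*k-3) + 1 ≤ S (idx t) ∧ S (idx t) ≤ bf t*(3*k-3) + (3*k-3) := by
      rw [heqt]
      exact block_val hk (hF (bf t) hbt).2 h1t h2t
    have hS := hinc s t hst htm
    have hpp : pf s < pf t := by
      have h := hmono s t hst htm
      rw [heqs, heqt, hbeq] at h
      omega
    rcases Nat.lt_trichotomy (partOf (3*k-3) k (F (bf t)) (pf s))
        (partOf (3*k-3) k (F (bf t)) (pf t)) with h | h | h
    · exact h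
    · exfalso
      have hc := hG.2.1 (pf s) (pf t) h1s hpp h2t h
      rw [hsvs, hsvt] at hc
      omega
    · exfalso
      have hc := hG.2.2 (pf t) (pf s) h1t h2t h1s h2s h
      rw [hsvs, hsvt] at hc
      omega
  set h : ℕ → ℕ := fun t => bf t * k + (partOf (3*k-3) k (F (bf t)) (pf t) - 1) with hhdef
  have hhmono : ∀ s t, s < t → t < m → h s < h t := by
    intro s t hst htm
    have hb := hble s t hst htm
    have hrs := hπrange s (by omega)
    have hrt := hπrange t htm
    rcases Nat.eq_or_lt_of_le hb with he | hlt
    · have hp := hπmono s t hst htm he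
      simp only [hhdef]
      rw [he]
      rw [he] at hrs
      omega
    · simp only [hhdef]
      have hbs := (hbp s (by omega)).1
      have hmul : (bf s+1)*k ≤ bf t*k := Nat.mul_le_mul_right _ (by omega)
      have hexp : (bf s+1)*k = bf s*k + k := by ring
      omega
  have hth : ∀ t, t < m → t ≤ h t := by
    intro t
    induction t with
    | zero => intro _; exact Nat.zero_le _
    | succ t ih =>
      intro ht
      have h1 := ih (by omega)
      have h2 := hhmono t (t+1) (by omega) ht
      omega
  have hlast := hth (m-1) (by omega)
  have hbm := (hbp (m-1) (by omega)).1
  have hrm := hπrange (m-1) (by omega)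
  have hmul : (bf (m-1)+1)*k ≤ c*k := Nat.mul_le_mul_right _ (by omega)
  have hexp : (bf (m-1)+1)*k = bf (m-1)*k + k := by ring
  have hck : c*k = k*c := Nat.mul_comm c k
  simp only [hhdef] at hlast
  omega


private lemma descent_run {k m : ℕ} {A : ℕ → ℕ}
    (hrc : IsRollercoasterN k m A) {t : ℕ} (htm : t + 1 < m) (hlt : A (t+1) < A t) :
    ∃ p q, p ≤ t ∧ t + 1 ≤ q ∧ q < m ∧ k ≤ q + 1 - p ∧ DecrSliceN A p q := by
  classical
  have hbase : DecrSliceN A t (t+1) := by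
    intro t' h1 h2
    have ht' : t' = t := by omega
    subst ht'
    exact hlt
  have hex : ∃ r, DecrSliceN A r (t+1) := ⟨t, hbase⟩
  set p := Nat.find hex with hpdef
  have hpdec : DecrSliceN A p (t+1) := Nat.find_spec hex
  have hple : p ≤ t := Nat.find_min' hex hbase
  set q := Nat.findGreatest (fun q' => DecrSliceN A t q') (m-1) with hqdef
  have hq1 : t+1 ≤ q := Nat.le_findGreatest (by omega) hbase
  have hq2 : q ≤ m-1 := Nat.findGreatest_le _
  have hqdec : DecrSliceN A t q :=
    Nat.findGreatest_spec (m := t+1) (by omega) hbase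
  have hdecpq : DecrSliceN A p q := by
    intro t' h1 h2
    rcases Nat.lt_or_ge t' t with hc | hc
    · exact hpdec t' h1 (by omega)
    · exact hqdec t' hc h2
  refine ⟨p, q, hple, hq1, by omega, ?_, hdecpq⟩
  apply hrc
  refine ⟨by omega, by omega, Or.inr hdecpq, ?_, ?_⟩
  · rcases Nat.eq_zero_or_pos p with h0 | h0
    · exact Or.inl h0
    right
    rintro (hi | hd)
    · have := hi t (by omega) (by omega)
      omega
    · have hdd : DecrSliceN A (p-1) (t+1) := fun t' h1 h2 => hd t' h1 (by omega)
      exact Nat.find_min hex (by omega) hdd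
  · rcases Nat.eq_or_lt_of_le (show q + 1 ≤ m by omega) with h0 | h0
    · exact Or.inl h0
    right
    rintro (hi | hd)
    · have := hi t (by omega) (by omega)
      omega
    · have hQ : DecrSliceN A t (q+1) := fun t' h1 h2 => hd t' (by omega) h2
      exact Nat.findGreatest_is_greatest (P := fun q' => DecrSliceN A t q') (n := m-1) (k := q+1) (by omega) (by omega) hQ

private lemma rc_incr {k n c : ℕ} (hk : 4 ≤ k) (hn : n = (3*k-3) * c)
    {S : ℕ → ℕ} (hU : InU k n S) {m : ℕ} {idx : ℕ → ℕ}
    (hpos : ∀ t, t < m → 1 ≤ idx t ∧ idx t ≤ n)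
    (hmono : ∀ s t, s < t → t < m → idx s < idx t)
    (hrc : IsRollercoasterN k m (fun t => S (idx t))) :
    ∀ t, t + 1 < m → S (idx t) < S (idx (t+1)) := by
  intro t htm
  by_contra hcon
  have hne : S (idx (t+1)) ≠ S (idx t) := by
    intro he
    have h1 := hpos t (by omega)
    have h2 := hpos (t+1) htm
    have heq := hU.1.2.1 (idx (t+1)) (idx t) h2.1 h2.2 h1.1 h1.2 he
    have := hmono t (t+1) (by omega) htm
    omega
  have hlt : S (idx (t+1)) < S (idx t) := by omega
  obtain ⟨p, q, hp, hq1, hqm, hkq, hdec⟩ :=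
    descent_run (A := fun u => S (idx u)) hrc htm hlt
  have hdecS : ∀ s s', s < s' → s' < q+1-p → S (idx (p+s')) < S (idx (p+s)) :=
    fun s s' hss hs' =>
      pairwise_of_decr hdec (p+s) (p+s') (by omega) (by omega) (by omega)
  have hb := lds_bound hk hn hU (m := q+1-p) (idx := fun s => idx (p+s))
      (fun s hs => hpos (p+s) (by omega))
      (fun s s' hss hs' => hmono (p+s) (p+s') (by omega) (by omega))
      hdecS
  omega

private lemma rc_of_incr {A : ℕ → ℕ} {k m : ℕ}
    (hA : ∀ t, t+1 < m → A t < A (t+1)) (hm : m = 0 ∨ k ≤ m) :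
    IsRollercoasterN k m A := by
  intro p q hrun
  obtain ⟨hpq, hqm, -, hleft, hright⟩ := hrun
  rcases hm with rfl | hm
  · omega
  have hp : p = 0 := by
    rcases hleft with h | h
    · exact h
    · exact absurd (Or.inl (fun t h1 h2 => hA t (by omega))) h
  have hq : q + 1 = m := by
    rcases hright with h | h
    · exact h
    · by_contra hne
      exact h (Or.inl (fun t h1 h2 => hA t (by omega)))
  omega


private lemma rc_mem {k n c : ℕ} (hk : 4 ≤ k) (hn : n = (3*k-3) * c)
    {S : ℕ → ℕ} (hU : InU k n S) :
    ∃ idx : ℕ → ℕ, ((∀ t, t < k*c → 1 ≤ idx t ∧ idx t < n + 1) ∧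
      ∀ s t, s < t → t < k*c → idx s < idx t) ∧
      IsRollercoasterN k (k*c) (fun t => S (idx t)) := by
  have hquot : n / (3*k-3) = c := by rw [hn]; exact Nat.mul_div_cancel_left c (by omega)
  have hk0 : 0 < k := by omega
  refine ⟨fun t => (t/k)*(3*k-3) + t%k + 1, ⟨?_, ?_⟩, ?_⟩
  · intro t ht
    show 1 ≤ (t/k)*(3*k-3) + t%k + 1 ∧ (t/k)*(3*k-3) + t%k + 1 < n + 1
    have hdm : k * (t/k) + t%k = t := Nat.div_add_mod t k
    have hmod : t%k < k := Nat.mod_lt t hk0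
    have hdiv : t/k < c := by
      by_contra hcon
      have : k * c ≤ k * (t/k) := Nat.mul_le_mul_left k (by omega)
      omega
    constructor
    · omega
    · have h1 : (t/k + 1)*(3*k-3) ≤ c*(3*k-3) := Nat.mul_le_mul_right _ (by omega)
      have h2 : (t/k + 1)*(3*k-3) = (t/k)*(3*k-3) + (3*k-3) := by ring
      have h3 : c*(3*k-3) = (3*k-3)*c := Nat.mul_comm _ _
      omega
  · intro s t hst htm
    show (s/k)*(3*k-3) + s%k + 1 < (t/k)*(3*k-3) + t%k + 1
    have hdms : k * (s/k) + s%k = s := Nat.div_add_mod s k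
    have hdmt : k * (t/k) + t%k = t := Nat.div_add_mod t k
    have hmods : s%k < k := Nat.mod_lt s hk0
    have hmodt : t%k < k := Nat.mod_lt t hk0
    have hdle : s/k ≤ t/k := Nat.div_le_div_right (le_of_lt hst)
    rcases Nat.eq_or_lt_of_le hdle with he | hlt
    · rw [he]
      have : k * (s/k) = k * (t/k) := by rw [he]
      omega
    · have h1 : (s/k + 1)*(3*k-3) ≤ (t/k)*(3*k-3) := Nat.mul_le_mul_right _ (by omega)
      have h2 : (s/k + 1)*(3*k-3) = (s/k)*(3*k-3) + (3*k-3) := by ring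
      omega
  · have hm : k*c = 0 ∨ k ≤ k*c := by
      rcases Nat.eq_zero_or_pos c with rfl | hc
      · left; omega
      · right
        calc k = k * 1 := (Nat.mul_one k).symm
        _ ≤ k * c := Nat.mul_le_mul_left k hc
    apply rc_of_incr ?_ hm
    intro t htm
    have hdm : k * (t/k) + t%k = t := Nat.div_add_mod t k
    have hmod : t%k < k := Nat.mod_lt t hk0
    have hdiv : t/k < c := by
      by_contra hcon
      have : k * c ≤ k * (t/k) := Nat.mul_le_mul_left k (by omega)
      omega
    have hdiv1c : (t+1)/k < c := by
      by_contra hcon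
      have hx : k * c ≤ k * ((t+1)/k) := Nat.mul_le_mul_left k (by omega)
      have hy : k * ((t+1)/k) + (t+1)%k = t+1 := Nat.div_add_mod (t+1) k
      omega
    rcases Nat.lt_or_ge (t%k) (k-1) with hr | hr
    · -- same block
      have ht1 : t+1 = k*(t/k) + (t%k+1) := by omega
      have hdiv1 : (t+1)/k = t/k := by
        rw [ht1, Nat.mul_add_div hk0]
        have hz : (t%k+1)/k = 0 := Nat.div_eq_of_lt (by omega)
        omega
      have hmod1 : (t+1)%k = t%k+1 := by
        rw [ht1, Nat.mul_add_mod]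
        exact Nat.mod_eq_of_lt (by omega)
      obtain ⟨f, hfv, hG⟩ := hU.2 (t/k) (by omega)
      have hcmp := hG.2.2 (t%k+1) (t%k+2) (by omega) (by omega) (by omega) (by omega)
        (by rw [partOf_low (by omega), partOf_low (by omega)]; omega)
      rw [shiftBlock_eval (by omega) (by omega), shiftBlock_eval (by omega) (by omega)] at hcmp
      have hv1 := block_val hk ⟨hG.1, hG.2.1, hG.2.2⟩ (p := t%k+1) (by omega) (by omega)
      have hv2 := block_val hk ⟨hG.1, hG.2.1, hG.2.2⟩ (p := t%k+2) (by omega) (by omega)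
      show S ((t/k)*(3*k-3) + t%k + 1) < S ((t+1)/k*(3*k-3) + (t+1)%k + 1)
      rw [hdiv1, hmod1]
      show S ((t/k)*(3*k-3) + (t%k+1)) < S ((t/k)*(3*k-3) + (t%k+2))
      omega
    · -- block boundary
      have hre : t%k = k-1 := by omega
      have hmk : k*(t/k + 1) = k*(t/k) + k := by ring
      have ht1 : t+1 = k*(t/k + 1) := by omega
      have hdiv1 : (t+1)/k = t/k + 1 := by
        rw [ht1]
        exact Nat.mul_div_cancel_left _ hk0
      have hmod1 : (t+1)%k = 0 := by
        rw [ht1]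
        exact Nat.mul_mod_right k _
      obtain ⟨f1, hfv1, hG1⟩ := hU.2 (t/k) (by omega)
      obtain ⟨f2, hfv2, hG2⟩ := hU.2 (t/k + 1) (by omega)
      have hv1 := block_val hk ⟨hG1.1, hG1.2.1, hG1.2.2⟩ (p := t%k+1) (by omega) (by omega)
      have hv2 := block_val hk ⟨hG2.1, hG2.2.1, hG2.2.2⟩ (p := 1) (by omega) (by omega)
      have hexp : (t/k + 1)*(3*k-3) = (t/k)*(3*k-3) + (3*k-3) := by ring
      show S ((t/k)*(3*k-3) + t%k + 1) < S ((t+1)/k*(3*k-3) + (t+1)%k + 1)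
      rw [hdiv1, hmod1]
      show S ((t/k)*(3*k-3) + (t%k+1)) < S ((t/k+1)*(3*k-3) + 1)
      omega


/-- Every permutation `S ∈ U` satisfies `LDS(S) ≤ k - 1`, and the length of a longest
`k`-rollercoaster in `S` equals `k * n / (3k - 3)`. -/
theorem stmt15 (k n : ℕ) (hk : 4 ≤ k) (hdvd : (3 * k - 3) ∣ n)
    (S : ℕ → ℕ) (hU : InU k n S) :
    LDSnat S 1 (n + 1) ≤ k - 1 ∧ maxRCnat k n S = k * n / (3 * k - 3) := by
  obtain ⟨c, hn⟩ := hdvd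
  constructor
  · rw [LDSnat]
    apply csSup_le
    · exact ⟨0, fun t => t, fun t ht => absurd ht (by omega),
        fun s t hs ht => absurd ht (by omega), fun s t hs ht => absurd ht (by omega)⟩
    · rintro m ⟨idx, h1, h2, h3⟩
      exact lds_bound hk hn hU (m := m) (idx := idx)
        (fun t ht => ⟨(h1 t ht).1, by have := (h1 t ht).2; omega⟩) h2 h3
  · have hkc : k * n / (3 * k - 3) = k * c := by
      rw [hn, show k * ((3*k-3)*c) = (3*k-3)*(k*c) by ring]
      exact Nat.mul_div_cancel_left _ (by omega)
    rw [hkc, maxRCnat]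
    have hub : ∀ m, (∃ idx : ℕ → ℕ,
        ((∀ t, t < m → 1 ≤ idx t ∧ idx t < n + 1) ∧
          ∀ s t, s < t → t < m → idx s < idx t) ∧
        IsRollercoasterN k m (fun t => S (idx t))) → m ≤ k * c := by
      rintro m ⟨idx, ⟨hp, hmono⟩, hrc⟩
      have hp' : ∀ t, t < m → 1 ≤ idx t ∧ idx t ≤ n :=
        fun t ht => ⟨(hp t ht).1, by have := (hp t ht).2; omega⟩
      have hcons := rc_incr hk hn hU (m := m) (idx := idx) hp' hmono hrc
      exact lis_bound hk hn hU (m := m) (idx := idx) hp' hmono (pairwise_of_consec hcons)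
    apply le_antisymm
    · apply csSup_le
      · refine ⟨0, fun t => t, ⟨fun t ht => absurd ht (by omega),
          fun s t hs ht => absurd ht (by omega)⟩, ?_⟩
        intro p q hrun
        obtain ⟨-, hq, -, -, -⟩ := hrun
        omega
      · intro m hm
        exact hub m hm
    · exact le_csSup ⟨k*c, fun m hm => hub m hm⟩ (rc_mem hk hn hU)

end Gamma
end
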